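/- arXiv:2510.06583 — 3 statements merged into one kernel-verified Lean document; each statement's English description precedes it below -/
import Mathlib

section
/- Let A, B ∈ ℂ^{n×n}. Suppose there exist α, β ∈ ℝ and a set ℬ ⊂ ℂ^{n×n} with B ∈ ℬ such that ℬ satisfies the β-arc property and −1 ∉ SRG_α(A) · SRG_β(ℬ) (elementwise product of sets of complex numbers). Then I + AB is nonsingular. -/
open scoped Pointwise Classical
open Complex

noncomputable section SRGDefs

/-- Apply a matrix to a vector in Euclidean space. -/
def mapply {n : ℕ} (C : Matrix (Fin n) (Fin n) ℂ) (x : EuclideanSpace ℂ (Fin n)) :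
    EuclideanSpace ℂ (Fin n) :=
  Matrix.toEuclideanLin C x

/-- The θ-angle `∠_θ(x,y) = arccos (Re ⟨x, e^{-iθ} y⟩ / (‖x‖‖y‖))` between complex vectors,
with value `0` if `x = 0` or `y = 0`. -/
def angleTheta {n : ℕ} (θ : ℝ) (x y : EuclideanSpace ℂ (Fin n)) : ℝ :=
  if x = 0 ∨ y = 0 then 0
  else Real.arccos ((inner ℂ x ((Complex.exp (-(θ : ℂ) * Complex.I)) • y) : ℂ).re / (‖x‖ * ‖y‖))

/-- The classical angle `∠(x,y) = arccos (Re ⟨x, y⟩ / (‖x‖‖y‖))` between complex vectors,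
with value `0` if `x = 0` or `y = 0`. -/
def angleStd {n : ℕ} (x y : EuclideanSpace ℂ (Fin n)) : ℝ :=
  if x = 0 ∨ y = 0 then 0
  else Real.arccos ((inner ℂ x y : ℂ).re / (‖x‖ * ‖y‖))

/-- The θ-symmetric scaled relative graph
`SRG_θ(C) = { (‖Cx‖/‖x‖)·e^{i(θ ± ∠_θ(x,Cx))} : 0 ≠ x ∈ ℂ^n }`. -/
def SRGt {n : ℕ} (θ : ℝ) (C : Matrix (Fin n) (Fin n) ℂ) : Set ℂ :=
  { w | ∃ x : EuclideanSpace ℂ (Fin n), x ≠ 0 ∧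
      (w = (↑(‖mapply C x‖ / ‖x‖) : ℂ) *
          Complex.exp ((↑(θ + angleTheta θ x (mapply C x)) : ℂ) * Complex.I) ∨
       w = (↑(‖mapply C x‖ / ‖x‖) : ℂ) *
          Complex.exp ((↑(θ - angleTheta θ x (mapply C x)) : ℂ) * Complex.I)) }

/-- The standard scaled relative graph
`SRG(C) = { (‖Cx‖/‖x‖)·e^{±i∠(x,Cx)} : 0 ≠ x ∈ ℂ^n }`. -/
def SRGstd {n : ℕ} (C : Matrix (Fin n) (Fin n) ℂ) : Set ℂ :=
  { w | ∃ x : EuclideanSpace ℂ (Fin n), x ≠ 0 ∧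
      (w = (↑(‖mapply C x‖ / ‖x‖) : ℂ) *
          Complex.exp ((↑(angleStd x (mapply C x)) : ℂ) * Complex.I) ∨
       w = (↑(‖mapply C x‖ / ‖x‖) : ℂ) *
          Complex.exp (-((↑(angleStd x (mapply C x)) : ℂ) * Complex.I))) }

/-- θ-symmetric SRG of a set of matrices. -/
def SRGtSet {n : ℕ} (θ : ℝ) (𝒞 : Set (Matrix (Fin n) (Fin n) ℂ)) : Set ℂ :=
  ⋃ C ∈ 𝒞, SRGt θ C

/-- Standard SRG of a set of matrices. -/
def SRGstdSet {n : ℕ} (𝒞 : Set (Matrix (Fin n) (Fin n) ℂ)) : Set ℂ :=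
  ⋃ C ∈ 𝒞, SRGstd C

/-- `Arc_θ^+(z, z̄e^{2iθ}) = { |z|·e^{i(μ·arg z + θ(1−μ))} : μ ∈ [−1,1] }`. -/
def arcPlus (θ : ℝ) (z : ℂ) : Set ℂ :=
  { w | ∃ μ : ℝ, μ ∈ Set.Icc (-1 : ℝ) 1 ∧
      w = (↑‖z‖ : ℂ) *
        Complex.exp ((↑(μ * Complex.arg z + θ * (1 - μ)) : ℂ) * Complex.I) }

/-- `Arc_θ^−(z, z̄e^{2iθ}) = −Arc_θ^+(−z, −z̄e^{2iθ})`. -/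
def arcMinus (θ : ℝ) (z : ℂ) : Set ℂ := -(arcPlus θ (-z))

/-- `Arc^+(z, z̄) = { |z|·e^{iμ·arg z} : μ ∈ [−1,1] }`. -/
def arcPlus0 (z : ℂ) : Set ℂ :=
  { w | ∃ μ : ℝ, μ ∈ Set.Icc (-1 : ℝ) 1 ∧
      w = (↑‖z‖ : ℂ) * Complex.exp ((↑(μ * Complex.arg z) : ℂ) * Complex.I) }

/-- `Arc^−(z, z̄) = −Arc^+(−z, −z̄)`. -/
def arcMinus0 (z : ℂ) : Set ℂ := -(arcPlus0 (-z))

/-- A matrix set satisfies the θ-arc property. -/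
def arcProp {n : ℕ} (θ : ℝ) (𝒞 : Set (Matrix (Fin n) (Fin n) ℂ)) : Prop :=
  (∀ z ∈ SRGtSet θ 𝒞, arcPlus θ z ⊆ SRGtSet θ 𝒞) ∨
  (∀ z ∈ SRGtSet θ 𝒞, arcMinus θ z ⊆ SRGtSet θ 𝒞)

/-- A matrix set satisfies the (standard) arc property. -/
def arcPropStd {n : ℕ} (𝒞 : Set (Matrix (Fin n) (Fin n) ℂ)) : Prop :=
  (∀ z ∈ SRGstdSet 𝒞, arcPlus0 z ⊆ SRGstdSet 𝒞) ∨
  (∀ z ∈ SRGstdSet 𝒞, arcMinus0 z ⊆ SRGstdSet 𝒞)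

/-- The line segment `[z₁, z₂] = { μz₁ + (1−μ)z₂ : μ ∈ [0,1] }`. -/
def segmentC (z₁ z₂ : ℂ) : Set ℂ :=
  { w | ∃ μ : ℝ, μ ∈ Set.Icc (0 : ℝ) 1 ∧ w = (↑μ : ℂ) * z₁ + (↑(1 - μ) : ℂ) * z₂ }

/-- A matrix set satisfies the θ-chord property. -/
def chordProp {n : ℕ} (θ : ℝ) (𝒞 : Set (Matrix (Fin n) (Fin n) ℂ)) : Prop :=
  ∀ z ∈ SRGtSet θ 𝒞,
    segmentC z ((starRingEnd ℂ) z * Complex.exp ((↑(2 * θ) : ℂ) * Complex.I)) ⊆ SRGtSet θ 𝒞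

/-- The arc hull `Hull_arc(SRG_θ(C)) = ⋃_{z ∈ SRG_θ(C)} Arc_θ^+(z, z̄e^{2iθ})`. -/
def hullArc {n : ℕ} (θ : ℝ) (C : Matrix (Fin n) (Fin n) ℂ) : Set ℂ :=
  ⋃ z ∈ SRGt θ C, arcPlus θ z

/-- The phase spread `Γ_θ(C) = sup_{0 ≠ x} ∠_θ(x, Cx)`. -/
def phaseSpread {n : ℕ} (θ : ℝ) (C : Matrix (Fin n) (Fin n) ℂ) : ℝ :=
  sSup { a : ℝ | ∃ x : EuclideanSpace ℂ (Fin n), x ≠ 0 ∧ a = angleTheta θ x (mapply C x) }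

/-- The largest singular value `σ_max(C) = max_{‖x‖=1} ‖Cx‖`. -/
def sigmaMax {n : ℕ} (C : Matrix (Fin n) (Fin n) ℂ) : ℝ :=
  sSup { a : ℝ | ∃ x : EuclideanSpace ℂ (Fin n), ‖x‖ = 1 ∧ a = ‖mapply C x‖ }

/-- The smallest singular value `σ_min(C) = min_{‖x‖=1} ‖Cx‖`. -/
def sigmaMin {n : ℕ} (C : Matrix (Fin n) (Fin n) ℂ) : ℝ :=
  sInf { a : ℝ | ∃ x : EuclideanSpace ℂ (Fin n), ‖x‖ = 1 ∧ a = ‖mapply C x‖ }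

/-- The spectrum `Λ(C)` of a matrix: the set of eigenvalues. -/
def eigs {n : ℕ} (C : Matrix (Fin n) (Fin n) ℂ) : Set ℂ :=
  { μ : ℂ | ∃ v : Fin n → ℂ, v ≠ 0 ∧ C.mulVec v = μ • v }

end SRGDefs


private lemma my_arccos_antitone : Antitone Real.arccos := by
  intro x y h
  unfold Real.arccos
  have := Real.monotone_arcsin h
  linarith

private lemma my_bound (c t : ℝ) (hc0 : 0 ≤ c) (hc1 : c ≤ 1) :
    -1 ≤ c * Real.cos t ∧ c * Real.cos t ≤ 1 := by
  constructor <;> nlinarith [Real.neg_one_le_cos t, Real.cos_le_one t]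

private lemma my_sin_arccos_ge (c t : ℝ) (hc0 : 0 ≤ c) (hc1 : c ≤ 1) :
    c * |Real.sin t| ≤ Real.sin (Real.arccos (c * Real.cos t)) := by
  rw [Real.sin_arccos]
  calc c * |Real.sin t| = Real.sqrt ((c * |Real.sin t|)^2) :=
        (Real.sqrt_sq (by positivity)).symm
    _ ≤ Real.sqrt (1 - (c * Real.cos t)^2) := Real.sqrt_le_sqrt (by
        have hc2 : c^2 ≤ 1 := by nlinarith
        nlinarith [Real.sin_sq_add_cos_sq t, _root_.sq_abs (Real.sin t), hc2])

private lemma my_LA (c₁ c₂ u v : ℝ) (h10 : 0 ≤ c₁) (h11 : c₁ ≤ 1) (h20 : 0 ≤ c₂) (h21 : c₂ ≤ 1) :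
    Real.arccos (c₁ * c₂ * Real.cos (u + v)) ≤
      Real.arccos (c₁ * Real.cos u) + Real.arccos (c₂ * Real.cos v) := by
  set a := Real.arccos (c₁ * Real.cos u) with ha
  set b := Real.arccos (c₂ * Real.cos v) with hb
  rcases le_or_gt Real.pi (a + b) with hab | hab
  · exact le_trans (Real.arccos_le_pi _) hab
  · have h0a : 0 ≤ a := Real.arccos_nonneg _
    have h0b : 0 ≤ b := Real.arccos_nonneg _
    have hcos : Real.cos (a + b) ≤ c₁ * c₂ * Real.cos (u + v) := by
      have hca : Real.cos a = c₁ * Real.cos u :=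
        Real.cos_arccos (my_bound c₁ u h10 h11).1 (my_bound c₁ u h10 h11).2
      have hcb : Real.cos b = c₂ * Real.cos v :=
        Real.cos_arccos (my_bound c₂ v h20 h21).1 (my_bound c₂ v h20 h21).2
      have hsa := my_sin_arccos_ge c₁ u h10 h11
      have hsb := my_sin_arccos_ge c₂ v h20 h21
      rw [← ha] at hsa
      rw [← hb] at hsb
      have h1 : c₁ * |Real.sin u| * (c₂ * |Real.sin v|) ≤ Real.sin a * Real.sin b :=
        mul_le_mul hsa hsb (by positivity) (le_trans (by positivity) hsa)
      have h2 : Real.sin u * Real.sin v ≤ |Real.sin u| * |Real.sin v| := by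
        calc Real.sin u * Real.sin v ≤ |Real.sin u * Real.sin v| := _root_.le_abs_self _
          _ = |Real.sin u| * |Real.sin v| := _root_.abs_mul _ _
      have h3 : c₁ * c₂ * (Real.sin u * Real.sin v) ≤ Real.sin a * Real.sin b := by
        calc c₁ * c₂ * (Real.sin u * Real.sin v)
            ≤ c₁ * c₂ * (|Real.sin u| * |Real.sin v|) :=
              mul_le_mul_of_nonneg_left h2 (by positivity)
          _ = c₁ * |Real.sin u| * (c₂ * |Real.sin v|) := by ring
          _ ≤ _ := h1
      rw [Real.cos_add, Real.cos_add, hca, hcb]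
      nlinarith [h3]
    calc Real.arccos (c₁ * c₂ * Real.cos (u+v)) ≤ Real.arccos (Real.cos (a+b)) :=
          my_arccos_antitone hcos
      _ = a + b := Real.arccos_cos (by linarith) (by linarith)

private lemma my_LB (c u v : ℝ) (hc0 : 0 ≤ c) (hc1 : c ≤ 1) :
    Real.arccos (Real.cos (u + v)) ≤
      Real.arccos (c * Real.cos u) + Real.arccos (c * Real.cos v) := by
  set a := Real.arccos (c * Real.cos u) with ha
  set b := Real.arccos (c * Real.cos v) with hb
  rcases le_or_gt Real.pi (a + b) with hab | hab
  · exact le_trans (Real.arccos_le_pi _) hab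
  · have h0a : 0 ≤ a := Real.arccos_nonneg _
    have h0b : 0 ≤ b := Real.arccos_nonneg _
    have hcos : Real.cos (a + b) ≤ Real.cos (u + v) := by
      have hca : Real.cos a = c * Real.cos u :=
        Real.cos_arccos (my_bound c u hc0 hc1).1 (my_bound c u hc0 hc1).2
      have hcb : Real.cos b = c * Real.cos v :=
        Real.cos_arccos (my_bound c v hc0 hc1).1 (my_bound c v hc0 hc1).2
      have hsa2 : (Real.sin a)^2 = 1 - (c * Real.cos u)^2 := by
        rw [ha, Real.sin_arccos, Real.sq_sqrt (by nlinarith [my_bound c u hc0 hc1])]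
      have hsb2 : (Real.sin b)^2 = 1 - (c * Real.cos v)^2 := by
        rw [hb, Real.sin_arccos, Real.sq_sqrt (by nlinarith [my_bound c v hc0 hc1])]
      have hsa0 : 0 ≤ Real.sin a := by rw [ha, Real.sin_arccos]; positivity
      have hsb0 : 0 ≤ Real.sin b := by rw [hb, Real.sin_arccos]; positivity
      have hu' : (Real.sin u)^2 = 1 - (Real.cos u)^2 := by
        nlinarith [Real.sin_sq_add_cos_sq u]
      have hv' : (Real.sin v)^2 = 1 - (Real.cos v)^2 := by
        nlinarith [Real.sin_sq_add_cos_sq v]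
      set X := Real.sin u * Real.sin v - (1 - c^2) * (Real.cos u * Real.cos v) with hX
      have hid : (1-(c*Real.cos u)^2)*(1-(c*Real.cos v)^2) - X^2
          = (1-c^2)*(Real.cos u*Real.sin v + Real.cos v*Real.sin u)^2 := by
        rw [hX]
        linear_combination (-(Real.sin v)^2 - (1-c^2)*(Real.cos v)^2) * hu' +
          (-(1 - (Real.cos u)^2) - (1-c^2)*(Real.cos u)^2) * hv'
      have hE : (0:ℝ) ≤ (1-c^2)*(Real.cos u*Real.sin v + Real.cos v*Real.sin u)^2 :=
        mul_nonneg (by nlinarith) (sq_nonneg _)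
      have hX2 : X^2 ≤ (Real.sin a * Real.sin b)^2 := by
        rw [mul_pow, hsa2, hsb2]; linarith [hid, hE]
      have hkey : X ≤ Real.sin a * Real.sin b := by
        rcases le_or_gt X 0 with hX0 | hX0
        · exact le_trans hX0 (mul_nonneg hsa0 hsb0)
        · calc X = Real.sqrt (X^2) := (Real.sqrt_sq hX0.le).symm
            _ ≤ Real.sqrt ((Real.sin a * Real.sin b)^2) := Real.sqrt_le_sqrt hX2
            _ = Real.sin a * Real.sin b := Real.sqrt_sq (mul_nonneg hsa0 hsb0)
      rw [Real.cos_add, Real.cos_add, hca, hcb]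
      nlinarith [hkey]
    calc Real.arccos (Real.cos (u+v)) ≤ Real.arccos (Real.cos (a+b)) :=
          my_arccos_antitone hcos
      _ = a + b := Real.arccos_cos (by linarith) (by linarith)


private lemma my_sin_d (w : ℝ) : Real.sin (Real.arccos (Real.cos w)) = |Real.sin w| := by
  rw [Real.sin_arccos]
  rw [show (1:ℝ) - Real.cos w ^ 2 = Real.sin w ^ 2 by nlinarith [Real.sin_sq_add_cos_sq w]]
  exact Real.sqrt_sq_eq_abs _

private lemma my_choice (c u v : ℝ) (hc0 : 0 ≤ c) (hc1 : c ≤ 1) :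
    ∃ ε : ℝ, (ε = 1 ∨ ε = -1) ∧
      Real.arccos (Real.cos (u + v - ε * Real.arccos (c * Real.cos u)))
        ≤ Real.arccos (c * Real.cos v) ∧
      Real.arccos (c * Real.cos v)
        ≤ Real.arccos (Real.cos (u + v + ε * Real.arccos (c * Real.cos u))) := by
  set a := Real.arccos (c * Real.cos u) with ha
  set b := Real.arccos (c * Real.cos v) with hb
  set d := Real.arccos (Real.cos (u + v)) with hd
  have ha0 : 0 ≤ a := Real.arccos_nonneg _
  have haπ : a ≤ Real.pi := Real.arccos_le_pi _
  have hb0 : 0 ≤ b := Real.arccos_nonneg _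
  have hbπ : b ≤ Real.pi := Real.arccos_le_pi _
  have hd0 : 0 ≤ d := Real.arccos_nonneg _
  have hdπ : d ≤ Real.pi := Real.arccos_le_pi _
  have hcd : Real.cos d = Real.cos (u + v) :=
    Real.cos_arccos (Real.neg_one_le_cos _) (Real.cos_le_one _)
  have hsd : Real.sin d = |Real.sin (u + v)| := my_sin_d _
  -- the four inequalities
  have I1 : d ≤ a + b := my_LB c u v hc0 hc1
  have I2 : a ≤ d + b := by
    have := my_LA 1 c (u + v) (-v) zero_le_one le_rfl hc0 hc1
    simpa [Real.cos_neg] using this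
  have I3 : b ≤ d + a := by
    have := my_LA 1 c (u + v) (-u) zero_le_one le_rfl hc0 hc1
    have h2 : u + v + -u = v := by ring
    rw [h2] at this
    simpa [Real.cos_neg, add_comm] using this
  have I4 : d ≤ 2 * Real.pi - a - b := by
    have := my_LB c (u + Real.pi) (v + Real.pi) hc0 hc1
    rw [show u + Real.pi + (v + Real.pi) = (u + v) + 2 * Real.pi by ring,
      Real.cos_add_two_pi, Real.cos_add_pi, Real.cos_add_pi, mul_neg, mul_neg,
      Real.arccos_neg, Real.arccos_neg, ← ha, ← hb, ← hd] at this
    linarith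
  -- helper for lower estimate
  have hge : ∀ w : ℝ, Real.cos w = Real.cos (d + a) → b ≤ Real.arccos (Real.cos w) := by
    intro w hw
    rw [hw]
    rcases le_or_gt (d + a) Real.pi with hp | hp
    · rw [Real.arccos_cos (by linarith) hp]; linarith
    · rw [← Real.cos_two_pi_sub, Real.arccos_cos (by linarith) (by linarith)]
      linarith
  have hle : ∀ w : ℝ, Real.cos w = Real.cos (d - a) → Real.arccos (Real.cos w) ≤ b := by
    intro w hw
    rw [hw, ← Real.cos_abs (d - a),
      Real.arccos_cos (_root_.abs_nonneg _) (by cases _root_.abs_cases (d - a) <;> linarith)]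
    cases _root_.abs_cases (d - a) <;> linarith
  rcases le_or_gt 0 (Real.sin (u + v)) with hs | hs
  · have hss : Real.sin (u + v) = Real.sin d := by rw [hsd, _root_.abs_of_nonneg hs]
    refine ⟨1, Or.inl rfl, ?_, ?_⟩
    · apply hle
      rw [one_mul, Real.cos_sub (u+v) a, Real.cos_sub d a, hcd, hss]
    · apply hge
      rw [one_mul, Real.cos_add (u+v) a, Real.cos_add d a, hcd, hss]
  · have hss : Real.sin (u + v) = -Real.sin d := by
      rw [hsd, _root_.abs_of_neg hs]; ring
    refine ⟨-1, Or.inr rfl, ?_, ?_⟩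
    · apply hle
      rw [show u + v - -1 * a = u + v + a by ring, Real.cos_add (u+v) a,
        Real.cos_sub d a, hcd, hss]
      ring
    · apply hge
      rw [show u + v + -1 * a = u + v - a by ring, Real.cos_sub (u+v) a,
        Real.cos_add d a, hcd, hss]
      ring

private lemma my_exp_eq (s t : ℝ) (hc : Real.cos s = Real.cos t) (hs : Real.sin s = Real.sin t) :
    Complex.exp ((s:ℂ) * Complex.I) = Complex.exp ((t:ℂ) * Complex.I) := by
  apply Complex.ext
  · rw [Complex.exp_ofReal_mul_I_re, Complex.exp_ofReal_mul_I_re, hc]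
  · rw [Complex.exp_ofReal_mul_I_im, Complex.exp_ofReal_mul_I_im, hs]

private lemma my_exp_eq_iff (s t : ℝ)
    (h : Complex.exp ((s:ℂ) * Complex.I) = Complex.exp ((t:ℂ) * Complex.I)) :
    Real.cos s = Real.cos t ∧ Real.sin s = Real.sin t := by
  constructor
  · rw [← Complex.exp_ofReal_mul_I_re s, ← Complex.exp_ofReal_mul_I_re t, h]
  · rw [← Complex.exp_ofReal_mul_I_im s, ← Complex.exp_ofReal_mul_I_im t, h]

private lemma my_hit (Δ T : ℝ) (h : Real.arccos (Real.cos T) ≤ Real.arccos (Real.cos Δ)) :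
    ∃ μ : ℝ, μ ∈ Set.Icc (-1:ℝ) 1 ∧
      Complex.exp ((↑(μ * Δ) : ℂ) * Complex.I) = Complex.exp ((T:ℂ) * Complex.I) := by
  set t := Real.arccos (Real.cos T) with ht
  have ht0 : 0 ≤ t := Real.arccos_nonneg _
  have hct : Real.cos t = Real.cos T :=
    Real.cos_arccos (Real.neg_one_le_cos _) (Real.cos_le_one _)
  have hst : Real.sin t = |Real.sin T| := my_sin_d _
  have hΔ : Real.arccos (Real.cos Δ) ≤ |Δ| := by
    rcases le_or_gt |Δ| Real.pi with hp | hp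
    · rw [← Real.cos_abs Δ, Real.arccos_cos (_root_.abs_nonneg _) hp]
    · exact le_trans (Real.arccos_le_pi _) hp.le
  have htΔ : t ≤ |Δ| := le_trans h hΔ
  rcases eq_or_ne Δ 0 with h0 | h0
  · refine ⟨0, by constructor <;> norm_num, ?_⟩
    have ht00 : t = 0 := le_antisymm (by simpa [h0] using htΔ) ht0
    have hsT : Real.sin T = 0 := by
      have := hst; rw [ht00, Real.sin_zero] at this
      exact _root_.abs_eq_zero.mp this.symm
    have hcT : Real.cos T = 1 := by
      have := hct; rw [ht00, Real.cos_zero] at this; exact this.symm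
    apply my_exp_eq <;> simp [hsT, hcT]
  · rcases le_or_gt 0 (Real.sin T) with hs | hs
    · refine ⟨t / Δ, ?_, ?_⟩
      · have habs : |t / Δ| ≤ 1 := by
          rw [_root_.abs_div, _root_.abs_of_nonneg ht0, div_le_one (_root_.abs_pos.mpr h0)]; exact htΔ
        exact ⟨(_root_.abs_le.mp habs).1, (_root_.abs_le.mp habs).2⟩
      · rw [div_mul_cancel₀ _ h0]
        apply my_exp_eq
        · rw [hct]
        · rw [hst, _root_.abs_of_nonneg hs]
    · refine ⟨-t / Δ, ?_, ?_⟩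
      · have habs : |(-t) / Δ| ≤ 1 := by
          rw [_root_.abs_div, _root_.abs_neg, _root_.abs_of_nonneg ht0, div_le_one (_root_.abs_pos.mpr h0)]; exact htΔ
        exact ⟨(_root_.abs_le.mp habs).1, (_root_.abs_le.mp habs).2⟩
      · rw [div_mul_cancel₀ _ h0]
        apply my_exp_eq
        · rw [Real.cos_neg, hct]
        · rw [Real.sin_neg, hst, _root_.abs_of_neg hs, neg_neg]

private lemma my_re (r t : ℝ) :
    ((r:ℂ) * Complex.exp ((t:ℂ) * Complex.I)).re = r * Real.cos t := by
  rw [Complex.mul_re, Complex.ofReal_re, Complex.ofReal_im, Complex.exp_ofReal_mul_I_re]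
  simp

private lemma my_abs (r t : ℝ) (hr : 0 ≤ r) :
    ‖(r:ℂ) * Complex.exp ((t:ℂ) * Complex.I)‖ = r := by
  rw [norm_mul, Complex.norm_exp, Complex.norm_of_nonneg hr]
  simp

private lemma my_merge (r s t : ℝ) :
    Complex.exp ((s:ℂ) * Complex.I) * ((r:ℂ) * Complex.exp ((t:ℂ) * Complex.I)) =
      (r:ℂ) * Complex.exp ((↑(t + s):ℂ) * Complex.I) := by
  rw [show ((t + s : ℝ):ℂ) * Complex.I = (t:ℂ) * Complex.I + (s:ℂ) * Complex.I by
    push_cast; ring, Complex.exp_add]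
  ring

private lemma my_prod (X Y s t : ℝ) (hX : 0 < X) (hY : 0 < Y) (hst : s + t = Real.pi) :
    ((X/Y : ℝ):ℂ) * Complex.exp ((s:ℂ) * Complex.I) *
      (((Y/X : ℝ):ℂ) * Complex.exp ((t:ℂ) * Complex.I)) = -1 := by
  rw [show ((X/Y:ℝ):ℂ) * Complex.exp ((s:ℂ)*Complex.I) *
      (((Y/X:ℝ):ℂ) * Complex.exp ((t:ℂ)*Complex.I))
      = (((X/Y)*(Y/X) : ℝ):ℂ) * Complex.exp ((s:ℂ)*Complex.I + (t:ℂ)*Complex.I) by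
    push_cast; rw [Complex.exp_add]; ring]
  rw [show (X/Y)*(Y/X) = 1 by field_simp]
  rw [show (s:ℂ)*Complex.I + (t:ℂ)*Complex.I = ((s+t : ℝ):ℂ)*Complex.I by push_cast; ring]
  rw [hst]
  simp [Complex.exp_pi_mul_I]


/-- two-component condition via arc-property product. -/
theorem stmt4 {n : ℕ} (A B : Matrix (Fin n) (Fin n) ℂ) (α β : ℝ)
    (ℬ : Set (Matrix (Fin n) (Fin n) ℂ)) (hB : B ∈ ℬ) (harc : arcProp β ℬ)
    (h : (-1 : ℂ) ∉ SRGt α A * SRGtSet β ℬ) :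
    IsUnit (1 + A * B) := by
  by_contra hu
  rw [Matrix.isUnit_iff_isUnit_det, isUnit_iff_ne_zero, ne_eq, not_not] at hu
  obtain ⟨v, hv0, hv⟩ := Matrix.exists_mulVec_eq_zero_iff.mpr hu
  -- vectors
  set x : EuclideanSpace ℂ (Fin n) := (WithLp.equiv 2 (Fin n → ℂ)).symm v with hxdef
  have hx0 : x ≠ 0 := by
    rw [hxdef]
    intro hc
    exact hv0 (by simpa using congrArg (WithLp.equiv 2 (Fin n → ℂ)) hc)
  have hmulAB : A.mulVec (B.mulVec v) = -v := by
    have h1 : (1 + A * B).mulVec v = v + A.mulVec (B.mulVec v) := by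
      rw [Matrix.add_mulVec, Matrix.one_mulVec, Matrix.mulVec_mulVec]
    rw [h1] at hv
    exact eq_neg_of_add_eq_zero_right hv
  set y : EuclideanSpace ℂ (Fin n) := mapply B x with hydef
  have hAy : mapply A y = -x := by
    rw [hydef, hxdef, mapply, mapply, WithLp.equiv_symm_apply, Matrix.toEuclideanLin_apply_piLp_toLp,
      Matrix.toEuclideanLin_apply_piLp_toLp, hmulAB, WithLp.toLp_neg]
  have hy0 : y ≠ 0 := by
    intro hc
    apply hx0
    have : mapply A y = 0 := by rw [hc, mapply, map_zero]
    rw [hAy] at this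
    simpa using this
  set X := ‖x‖ with hXdef
  set Y := ‖y‖ with hYdef
  have hX : 0 < X := by rw [hXdef]; exact norm_pos_iff.mpr hx0
  have hY : 0 < Y := by rw [hYdef]; exact norm_pos_iff.mpr hy0
  -- inner product data
  set ip : ℂ := inner ℂ x y with hipdef
  set ρ : ℝ := ‖ip‖ with hρdef
  set φ : ℝ := Complex.arg ip with hφdef
  have hip : ip = (ρ:ℂ) * Complex.exp ((φ:ℂ) * Complex.I) := by
    rw [hρdef, hφdef]; exact (Complex.norm_mul_exp_arg_mul_I ip).symm
  set c : ℝ := ρ / (X * Y) with hcdef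
  have hc0 : 0 ≤ c := by
    rw [hcdef]; positivity
  have hc1 : c ≤ 1 := by
    rw [hcdef, div_le_one (by positivity)]
    rw [hρdef, hipdef]
    exact norm_inner_le_norm (𝕜 := ℂ) x y
  set uu : ℝ := Real.pi - α - φ with huudef
  set vv : ℝ := φ - β with hvvdef
  set a : ℝ := Real.arccos (c * Real.cos uu) with hadef
  set b : ℝ := Real.arccos (c * Real.cos vv) with hbdef
  have hb0 : 0 ≤ b := Real.arccos_nonneg _
  have hbπ : b ≤ Real.pi := Real.arccos_le_pi _
  -- angle computations
  have hbeq : angleTheta β x y = b := by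
    rw [angleTheta, if_neg (by push_neg; exact ⟨hx0, hy0⟩)]
    rw [hbdef]
    congr 1
    have hsm : (inner ℂ x ((Complex.exp (-(β:ℂ) * Complex.I)) • y) : ℂ)
        = Complex.exp (-(β:ℂ) * Complex.I) * ip := by
      rw [hipdef]; exact inner_smul_right x y _
    rw [hsm, hip]
    rw [show Complex.exp (-(β:ℂ) * Complex.I) * ((ρ:ℂ) * Complex.exp ((φ:ℂ) * Complex.I))
        = (ρ:ℂ) * Complex.exp ((↑(φ - β):ℂ) * Complex.I) by
      rw [show ((φ - β : ℝ):ℂ) * Complex.I = -(β:ℂ) * Complex.I + (φ:ℂ) * Complex.I by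
        push_cast; ring, Complex.exp_add]
      ring]
    rw [my_re, ← hXdef, ← hYdef, ← hvvdef, mul_div_right_comm, ← hcdef]
  have haeq : angleTheta α y (mapply A y) = a := by
    rw [hAy, angleTheta, if_neg (by push_neg; exact ⟨hy0, fun hc => hx0 (by simpa using hc)⟩)]
    rw [hadef]
    congr 1
    have hyx : (inner ℂ y x : ℂ) = (starRingEnd ℂ) ip := by
      rw [hipdef, ← inner_conj_symm]
    have hconj : (starRingEnd ℂ) ip = (ρ:ℂ) * Complex.exp ((↑(-φ):ℂ) * Complex.I) := by
      rw [hip, map_mul, Complex.conj_ofReal, ← Complex.exp_conj, map_mul,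
        Complex.conj_ofReal, Complex.conj_I]
      push_cast
      ring_nf
    have hsm : (inner ℂ y ((Complex.exp (-(α:ℂ) * Complex.I)) • (-x)) : ℂ)
        = Complex.exp (-(α:ℂ) * Complex.I) * -(inner ℂ y x : ℂ) := by
      rw [inner_smul_right y (-x) _, inner_neg_right]
    rw [hsm, hyx, hconj]
    rw [show Complex.exp (-(α:ℂ) * Complex.I) * -((ρ:ℂ) * Complex.exp ((↑(-φ):ℂ) * Complex.I))
        = -((ρ:ℂ) * Complex.exp ((↑(-φ - α):ℂ) * Complex.I)) by
      rw [show ((-φ - α : ℝ):ℂ) * Complex.I = -(α:ℂ) * Complex.I + (↑(-φ):ℂ) * Complex.I by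
        push_cast; ring, Complex.exp_add]
      ring]
    rw [Complex.neg_re, my_re, norm_neg, ← hXdef, ← hYdef]
    rw [show -(ρ * Real.cos (-φ - α)) = ρ * Real.cos (Real.pi - α - φ) by
      rw [show Real.pi - α - φ = Real.pi - (α + φ) by ring, Real.cos_pi_sub,
        show -φ - α = -(α + φ) by ring, Real.cos_neg]
      ring]
    rw [← huudef, mul_div_right_comm]
    rw [show ρ / (Y * X) = c by rw [hcdef, mul_comm Y X]]
  -- norms of images
  have hnB : ‖mapply B x‖ = Y := by rw [← hydef, ← hYdef]
  have hnA : ‖mapply A y‖ = X := by rw [hAy, norm_neg, ← hXdef]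
  -- SRG memberships
  have hwA : ∀ e : ℝ, e = 1 ∨ e = -1 →
      ((X/Y : ℝ):ℂ) * Complex.exp ((↑(α + e * a):ℂ) * Complex.I) ∈ SRGt α A := by
    intro e he
    refine ⟨y, hy0, ?_⟩
    rw [haeq, hnA, ← hYdef]
    rcases he with he | he
    · left
      subst he
      rw [one_mul]
    · right
      subst he
      rw [show α + (-1:ℝ) * a = α - a by ring]
  set z : ℂ := ((Y/X : ℝ):ℂ) * Complex.exp ((↑(β + b):ℂ) * Complex.I) with hzdef
  have hzB : z ∈ SRGt β B := by
    refine ⟨x, hx0, Or.inl ?_⟩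
    rw [← hydef, hbeq, ← hYdef, ← hXdef]
  have hz : z ∈ SRGtSet β ℬ := by
    show z ∈ ⋃ C ∈ ℬ, SRGt β C
    exact Set.mem_biUnion hB hzB
  have habsz : ‖z‖ = Y / X := by
    rw [hzdef]; exact my_abs _ _ (by positivity)
  have hargz : Complex.exp ((↑(Complex.arg z):ℂ) * Complex.I)
      = Complex.exp ((↑(β + b):ℂ) * Complex.I) := by
    have h1 := Complex.norm_mul_exp_arg_mul_I z
    rw [habsz] at h1
    nth_rewrite 2 [hzdef] at h1
    exact mul_left_cancel₀ (by
      simp only [ne_eq, Complex.ofReal_eq_zero]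
      positivity) h1
  obtain ⟨ε, hε, hchle, hchge⟩ := my_choice c uu vv hc0 hc1
  have huv : uu + vv = Real.pi - α - β := by rw [huudef, hvvdef]; ring
  rcases harc with hp | hm
  · -- arcPlus case
    have hcosΔ : Real.cos (Complex.arg z - β) = Real.cos b := by
      obtain ⟨hc', hs'⟩ := my_exp_eq_iff _ _ hargz
      rw [Real.cos_sub, hc', hs', ← Real.cos_sub, show β + b - β = b by ring]
    have hcond : Real.arccos (Real.cos ((Real.pi - α - ε * a) - β))
        ≤ Real.arccos (Real.cos (Complex.arg z - β)) := by
      rw [hcosΔ, Real.arccos_cos hb0 hbπ,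
        show Real.pi - α - ε * a - β = uu + vv - ε * Real.arccos (c * Real.cos uu) by
          rw [huv, ← hadef]; ring]
      exact hchle
    obtain ⟨μ, hμ, hexp⟩ := my_hit _ _ hcond
    set wB : ℂ := ((‖z‖ : ℝ):ℂ) *
      Complex.exp ((↑(μ * Complex.arg z + β * (1 - μ)):ℂ) * Complex.I) with hwBdef
    have hwBarc : wB ∈ arcPlus β z := ⟨μ, hμ, rfl⟩
    have hwBS : wB ∈ SRGtSet β ℬ := hp z hz hwBarc
    have hwBval : wB = ((Y/X : ℝ):ℂ) *
        Complex.exp ((↑(Real.pi - α - ε * a):ℂ) * Complex.I) := by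
      rw [hwBdef, habsz]
      congr 1
      rw [show ((μ * Complex.arg z + β * (1 - μ) : ℝ):ℂ) * Complex.I
          = ((β : ℝ):ℂ) * Complex.I + ((μ * (Complex.arg z - β) : ℝ):ℂ) * Complex.I by
        push_cast; ring, Complex.exp_add, hexp, ← Complex.exp_add]
      congr 1
      push_cast
      ring
    apply h
    rw [show (-1 : ℂ) = ((X/Y : ℝ):ℂ) * Complex.exp ((↑(α + ε * a):ℂ) * Complex.I) * wB by
      rw [hwBval, my_prod X Y _ _ hX hY (by ring)]]
    exact Set.mul_mem_mul (hwA ε hε) hwBS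
  · -- arcMinus case
    have hnegz : -z = ((Y/X : ℝ):ℂ) * Complex.exp ((↑(β + b + Real.pi):ℂ) * Complex.I) := by
      rw [hzdef, show ((β + b + Real.pi : ℝ):ℂ) * Complex.I
          = ((β + b : ℝ):ℂ) * Complex.I + (↑Real.pi:ℂ) * Complex.I by push_cast; ring,
        Complex.exp_add, Complex.exp_pi_mul_I]
      ring
    have habsz2 : ‖-z‖ = Y / X := by
      rw [hnegz]; exact my_abs _ _ (by positivity)
    have hargz2 : Complex.exp ((↑(Complex.arg (-z)):ℂ) * Complex.I)
        = Complex.exp ((↑(β + b + Real.pi):ℂ) * Complex.I) := by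
      have h1 := Complex.norm_mul_exp_arg_mul_I (-z)
      rw [habsz2] at h1
      nth_rewrite 2 [hnegz] at h1
      exact mul_left_cancel₀ (by
        simp only [ne_eq, Complex.ofReal_eq_zero]
        positivity) h1
    have hcosΔ : Real.cos (Complex.arg (-z) - β) = Real.cos (b + Real.pi) := by
      obtain ⟨hc', hs'⟩ := my_exp_eq_iff _ _ hargz2
      rw [Real.cos_sub, hc', hs', ← Real.cos_sub, show β + b + Real.pi - β = b + Real.pi by ring]
    have harc2 : Real.arccos (Real.cos (Complex.arg (-z) - β)) = Real.pi - b := by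
      rw [hcosΔ, Real.cos_add_pi, Real.arccos_neg, Real.arccos_cos hb0 hbπ]
    have hcond : Real.arccos (Real.cos ((Real.pi - α + ε * a + Real.pi) - β))
        ≤ Real.arccos (Real.cos (Complex.arg (-z) - β)) := by
      rw [harc2, show Real.pi - α + ε * a + Real.pi - β
          = (uu + vv + ε * Real.arccos (c * Real.cos uu)) + Real.pi by
        rw [huv, ← hadef]; ring]
      rw [Real.cos_add_pi, Real.arccos_neg]
      linarith [hchge]
    obtain ⟨μ, hμ, hexp⟩ := my_hit _ _ hcond
    set wB' : ℂ := ((‖-z‖ : ℝ):ℂ) *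
      Complex.exp ((↑(μ * Complex.arg (-z) + β * (1 - μ)):ℂ) * Complex.I) with hwBdef
    have hwBarc : wB' ∈ arcPlus β (-z) := ⟨μ, hμ, rfl⟩
    have hwBS : -wB' ∈ SRGtSet β ℬ := by
      apply hm z hz
      rw [arcMinus, Set.mem_neg, neg_neg]
      exact hwBarc
    have hwBval : -wB' = ((Y/X : ℝ):ℂ) *
        Complex.exp ((↑(Real.pi - α + ε * a):ℂ) * Complex.I) := by
      have hwB'val : wB' = ((Y/X : ℝ):ℂ) *
          Complex.exp ((↑(Real.pi - α + ε * a + Real.pi):ℂ) * Complex.I) := by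
        rw [hwBdef, habsz2]
        congr 1
        rw [show ((μ * Complex.arg (-z) + β * (1 - μ) : ℝ):ℂ) * Complex.I
            = ((β : ℝ):ℂ) * Complex.I + ((μ * (Complex.arg (-z) - β) : ℝ):ℂ) * Complex.I by
          push_cast; ring, Complex.exp_add, hexp, ← Complex.exp_add]
        congr 1
        push_cast
        ring
      rw [hwB'val, show ((Real.pi - α + ε * a + Real.pi : ℝ):ℂ) * Complex.I
          = ((Real.pi - α + ε * a : ℝ):ℂ) * Complex.I + (↑Real.pi:ℂ) * Complex.I by
        push_cast; ring, Complex.exp_add, Complex.exp_pi_mul_I]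
      ring
    apply h
    rw [show (-1 : ℂ) = ((X/Y : ℝ):ℂ) * Complex.exp ((↑(α + (-ε) * a):ℂ) * Complex.I) * (-wB') by
      rw [hwBval, my_prod X Y _ _ hX hY (by ring)]]
    have hε2 : (-ε : ℝ) = 1 ∨ (-ε : ℝ) = -1 := by
      rcases hε with he | he
      · right; norm_num [he]
      · left; norm_num [he]
    exact Set.mul_mem_mul (hwA (-ε) hε2) hwBS
end

section
/- Let A_1, A_2, ..., A_N ∈ ℂ^{n×n}. Suppose there exist α_1, ..., α_N ∈ ℝ and an index k ∈ {1,...,N} such that −1 ∉ SRG_{α_k}(A_k) · 𝒮, where 𝒮 = { z ∈ ℂ : |z| ∈ [∏_{i≠k} σ_min(A_i), ∏_{i≠k} σ_max(A_i)] and z = |z|e^{iφ} for some φ ∈ [∑_{i≠k}(α_i − Γ_{α_i}(A_i)), ∑_{i≠k}(α_i + Γ_{α_i}(A_i))] }. Then I + A_1 A_2 ⋯ A_N is nonsingular. -/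
open scoped Pointwise Classical
open Complex

/-! ### Auxiliary lemmas -/

section AngleTriangle
open InnerProductGeometry Real

variable {V : Type*} [NormedAddCommGroup V] [InnerProductSpace ℝ V]

local notation "⟪" x ", " y "⟫" => @inner ℝ V _ x y

private lemma aux_inner_ge_of_unit {x y z : V} (hx : ‖x‖ = 1) (hy : ‖y‖ = 1) (hz : ‖z‖ = 1) :
    ⟪x,y⟫ * ⟪y,z⟫ - Real.sqrt (1 - ⟪x,y⟫^2) * Real.sqrt (1 - ⟪y,z⟫^2) ≤ ⟪x,z⟫ := by
  have hyy : ⟪y,y⟫ = 1 := by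
    have := real_inner_self_eq_norm_sq y; rw [hy] at this; simpa using this
  have hxx : ⟪x,x⟫ = 1 := by
    have := real_inner_self_eq_norm_sq x; rw [hx] at this; simpa using this
  have hzz : ⟪z,z⟫ = 1 := by
    have := real_inner_self_eq_norm_sq z; rw [hz] at this; simpa using this
  have huv : ⟪x - ⟪x,y⟫ • y, z - ⟪y,z⟫ • y⟫ = ⟪x,z⟫ - ⟪x,y⟫ * ⟪y,z⟫ := by
    simp only [inner_sub_left, inner_sub_right, real_inner_smul_left,
      real_inner_smul_right, hyy]
    rw [real_inner_comm y x, real_inner_comm z y]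
    ring
  have hun : ‖x - ⟪x,y⟫ • y‖^2 = 1 - ⟪x,y⟫^2 := by
    rw [← real_inner_self_eq_norm_sq]
    simp only [inner_sub_left, inner_sub_right, real_inner_smul_left,
      real_inner_smul_right, hyy, hxx]
    rw [real_inner_comm y x]; ring
  have hvn : ‖z - ⟪y,z⟫ • y‖^2 = 1 - ⟪y,z⟫^2 := by
    rw [← real_inner_self_eq_norm_sq]
    simp only [inner_sub_left, inner_sub_right, real_inner_smul_left,
      real_inner_smul_right, hyy, hzz]
    rw [real_inner_comm z y]; ring
  have h1 : Real.sqrt (1 - ⟪x,y⟫^2) = ‖x - ⟪x,y⟫ • y‖ := by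
    rw [← hun, Real.sqrt_sq (norm_nonneg _)]
  have h2 : Real.sqrt (1 - ⟪y,z⟫^2) = ‖z - ⟪y,z⟫ • y‖ := by
    rw [← hvn, Real.sqrt_sq (norm_nonneg _)]
  have h3 := abs_real_inner_le_norm (x - ⟪x,y⟫ • y) (z - ⟪y,z⟫ • y)
  rcases abs_le.mp h3 with ⟨h4, _⟩
  rw [huv] at h4
  rw [h1, h2]
  linarith

private lemma aux_arccos_le_arccos {x y : ℝ} (h : x ≤ y) :
    Real.arccos y ≤ Real.arccos x := by
  unfold Real.arccos
  have := Real.monotone_arcsin h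
  linarith

private lemma aux_angle_triangle_unit {x y z : V} (hx : ‖x‖ = 1) (hy : ‖y‖ = 1)
    (hz : ‖z‖ = 1) : angle x z ≤ angle x y + angle y z := by
  by_cases hle : π ≤ angle x y + angle y z
  · exact le_trans (angle_le_pi x z) hle
  push_neg at hle
  have ha0 : 0 ≤ angle x y := angle_nonneg _ _
  have hb0 : 0 ≤ angle y z := angle_nonneg _ _
  have hapi : angle x y ≤ π := angle_le_pi _ _
  have hbpi : angle y z ≤ π := angle_le_pi _ _
  have hca : Real.cos (angle x y) = ⟪x,y⟫ := by rw [cos_angle, hx, hy]; simp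
  have hcb : Real.cos (angle y z) = ⟪y,z⟫ := by rw [cos_angle, hy, hz]; simp
  have hcos : Real.cos (angle x y + angle y z) ≤ ⟪x,z⟫ := by
    rw [Real.cos_add, Real.sin_eq_sqrt_one_sub_cos_sq ha0 hapi,
      Real.sin_eq_sqrt_one_sub_cos_sq hb0 hbpi, hca, hcb]
    exact aux_inner_ge_of_unit hx hy hz
  have hangle : angle x z = Real.arccos ⟪x,z⟫ := by rw [angle, hx, hz]; simp
  rw [hangle]
  calc Real.arccos ⟪x,z⟫ ≤ Real.arccos (Real.cos (angle x y + angle y z)) :=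
        aux_arccos_le_arccos hcos
    _ = angle x y + angle y z := Real.arccos_cos (by linarith) (le_of_lt hle)

lemma aux_angle_triangle (x y z : V) : angle x z ≤ angle x y + angle y z := by
  by_cases hx : x = 0
  · subst hx
    rw [angle_zero_left, angle_zero_left]
    linarith [angle_nonneg y z]
  by_cases hz : z = 0
  · subst hz
    rw [angle_zero_right, angle_zero_right]
    linarith [angle_nonneg x y]
  by_cases hy : y = 0
  · subst hy
    rw [angle_zero_right, angle_zero_left]
    linarith [angle_le_pi x z]
  have hx' : (0:ℝ) < ‖x‖⁻¹ := inv_pos.mpr (norm_pos_iff.mpr hx)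
  have hy' : (0:ℝ) < ‖y‖⁻¹ := inv_pos.mpr (norm_pos_iff.mpr hy)
  have hz' : (0:ℝ) < ‖z‖⁻¹ := inv_pos.mpr (norm_pos_iff.mpr hz)
  have e1 : angle x z = angle (‖x‖⁻¹ • x) (‖z‖⁻¹ • z) := by
    rw [angle_smul_left_of_pos _ _ hx', angle_smul_right_of_pos _ _ hz']
  have e2 : angle x y = angle (‖x‖⁻¹ • x) (‖y‖⁻¹ • y) := by
    rw [angle_smul_left_of_pos _ _ hx', angle_smul_right_of_pos _ _ hy']
  have e3 : angle y z = angle (‖y‖⁻¹ • y) (‖z‖⁻¹ • z) := by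
    rw [angle_smul_left_of_pos _ _ hy', angle_smul_right_of_pos _ _ hz']
  rw [e1, e2, e3]
  apply aux_angle_triangle_unit <;>
  · rw [norm_smul, norm_inv, norm_norm]
    exact inv_mul_cancel₀ (norm_ne_zero_iff.mpr ‹_›)

end AngleTriangle

noncomputable section RAng

open Real

variable {E : Type*} [NormedAddCommGroup E] [InnerProductSpace ℂ E]

def rip (E : Type*) [NormedAddCommGroup E] [InnerProductSpace ℂ E] :
    InnerProductSpace ℝ E := InnerProductSpace.rclikeToReal ℂ E

def rang (x y : E) : ℝ := @InnerProductGeometry.angle E _ (rip E) x y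

lemma rang_eq (x y : E) :
    rang x y = Real.arccos ((inner ℂ x y : ℂ).re / (‖x‖ * ‖y‖)) := rfl

lemma rang_triangle (x y z : E) : rang x z ≤ rang x y + rang y z :=
  @aux_angle_triangle E _ (rip E) x y z

lemma rang_comm (x y : E) : rang x y = rang y x :=
  @InnerProductGeometry.angle_comm E _ (rip E) x y

lemma rang_nonneg (x y : E) : 0 ≤ rang x y :=
  @InnerProductGeometry.angle_nonneg E _ (rip E) x y

lemma rang_le_pi (x y : E) : rang x y ≤ π :=
  @InnerProductGeometry.angle_le_pi E _ (rip E) x y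

lemma rang_self {x : E} (hx : x ≠ 0) : rang x x = 0 :=
  @InnerProductGeometry.angle_self E _ (rip E) x hx

lemma norm_c_one {c : ℂ} (hc : ‖c‖ = 1) : ‖c‖ = 1 := by
  rw [hc]

lemma rang_smul_smul {c : ℂ} (hc : ‖c‖ = 1) (x y : E) :
    rang (c • x) (c • y) = rang x y := by
  rw [rang_eq, rang_eq]
  have h1 : (inner ℂ (c • x) (c • y) : ℂ) = inner ℂ x y := by
    rw [inner_smul_left, inner_smul_right, ← mul_assoc, Complex.conj_mul',
      norm_c_one hc]
    simp
  rw [h1, norm_smul, norm_smul, norm_c_one hc, one_mul, one_mul]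

lemma rang_smul_self {c : ℂ} (hc : ‖c‖ = 1) {x : E} (hx : x ≠ 0) :
    rang x (c • x) = Real.arccos c.re := by
  rw [rang_eq, inner_smul_right]
  have hxx : (inner ℂ x x : ℂ) = (‖x‖ : ℂ) ^ 2 := inner_self_eq_norm_sq_to_K x
  have hnx : ‖x‖ ≠ 0 := norm_ne_zero_iff.mpr hx
  rw [hxx, norm_smul, norm_c_one hc, one_mul]
  have h2 : (c * (‖x‖:ℂ)^2).re = c.re * ‖x‖^2 := by
    simp [Complex.mul_re, ← Complex.ofReal_pow]
  rw [h2]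
  congr 1
  rw [show ‖x‖*‖x‖ = ‖x‖^2 by ring, mul_div_assoc, div_self (pow_ne_zero 2 hnx), mul_one]

lemma rang_chain (f : ℕ → E) (hf : ∀ j, f j ≠ 0) (a b : ℕ) (hab : a ≤ b) :
    rang (f b) (f a) ≤ ∑ j ∈ Finset.Ico a b, rang (f (j+1)) (f j) := by
  induction b, hab using Nat.le_induction with
  | base => simp [rang_self (hf a)]
  | succ b hab ih =>
      rw [Finset.sum_Ico_succ_top hab]
      calc rang (f (b+1)) (f a) ≤ rang (f (b+1)) (f b) + rang (f b) (f a) :=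
            rang_triangle _ _ _
        _ ≤ rang (f (b+1)) (f b) + ∑ j ∈ Finset.Ico a b, rang (f (j+1)) (f j) := by
            linarith [ih]
        _ = _ := by ring

end RAng

noncomputable section MatrixAux

open Real Finset

variable {n : ℕ}

lemma mapply_smul (C : Matrix (Fin n) (Fin n) ℂ) (c : ℂ) (v : EuclideanSpace ℂ (Fin n)) :
    mapply C (c • v) = c • mapply C v := by
  simp [mapply, map_smul]

lemma mapply_mul (B C : Matrix (Fin n) (Fin n) ℂ) (v : EuclideanSpace ℂ (Fin n)) :
    mapply (B * C) v = mapply B (mapply C v) := by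
  simp only [mapply, Matrix.toEuclideanLin_apply, Equiv.apply_symm_apply,
    Matrix.mulVec_mulVec]

lemma mapply_one (v : EuclideanSpace ℂ (Fin n)) : mapply 1 v = v := by
  simp only [mapply, Matrix.toEuclideanLin_apply, Matrix.one_mulVec, Equiv.symm_apply_apply]

lemma angleTheta_mem (θ : ℝ) (x y : EuclideanSpace ℂ (Fin n)) :
    angleTheta θ x y ∈ Set.Icc 0 π := by
  unfold angleTheta
  split
  · exact ⟨le_refl 0, Real.pi_pos.le⟩
  · exact ⟨Real.arccos_nonneg _, Real.arccos_le_pi _⟩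

lemma angleTheta_eq_rang (θ : ℝ) {x y : EuclideanSpace ℂ (Fin n)} (hx : x ≠ 0) (hy : y ≠ 0) :
    angleTheta θ x y = rang x (Complex.exp (-(θ:ℂ) * Complex.I) • y) := by
  unfold angleTheta
  rw [if_neg (by tauto), rang_eq, norm_smul]
  congr 2
  rw [norm_c_one]
  · ring
  · rw [Complex.norm_exp]
    simp

lemma abs_exp_neg_theta (θ : ℝ) : ‖Complex.exp (-(θ:ℂ) * Complex.I)‖ = 1 := by
  rw [Complex.norm_exp]; simp

lemma angleTheta_le_phaseSpread (θ : ℝ) (C : Matrix (Fin n) (Fin n) ℂ)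
    {x : EuclideanSpace ℂ (Fin n)} (hx : x ≠ 0) :
    angleTheta θ x (mapply C x) ≤ phaseSpread θ C := by
  apply le_csSup
  · refine ⟨π, ?_⟩
    rintro a ⟨y, hy, rfl⟩
    exact (angleTheta_mem θ y (mapply C y)).2
  · exact ⟨x, hx, rfl⟩

lemma bddAbove_sigmaSet (C : Matrix (Fin n) (Fin n) ℂ) :
    BddAbove { a : ℝ | ∃ x : EuclideanSpace ℂ (Fin n), ‖x‖ = 1 ∧ a = ‖mapply C x‖ } := by
  refine ⟨‖(LinearMap.toContinuousLinearMap (Matrix.toEuclideanLin C))‖, ?_⟩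
  rintro a ⟨x, hx, rfl⟩
  have : mapply C x = (LinearMap.toContinuousLinearMap (Matrix.toEuclideanLin C)) x := rfl
  rw [this]
  calc ‖_‖ ≤ ‖_‖ * ‖x‖ := ContinuousLinearMap.le_opNorm _ x
    _ = _ := by rw [hx, mul_one]

lemma sigmaMax_nonneg (hn : 0 < n) (C : Matrix (Fin n) (Fin n) ℂ) : 0 ≤ sigmaMax C := by
  have hmem : ‖mapply C (EuclideanSpace.single ⟨0, hn⟩ (1:ℂ))‖ ∈
      { a : ℝ | ∃ x : EuclideanSpace ℂ (Fin n), ‖x‖ = 1 ∧ a = ‖mapply C x‖ } := by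
    refine ⟨_, ?_, rfl⟩
    rw [EuclideanSpace.norm_single]
    simp
  exact le_trans (norm_nonneg _) (le_csSup (bddAbove_sigmaSet C) hmem)

lemma mapply_le_sigmaMax (C : Matrix (Fin n) (Fin n) ℂ) (v : EuclideanSpace ℂ (Fin n)) :
    ‖mapply C v‖ ≤ sigmaMax C * ‖v‖ := by
  unfold sigmaMax
  by_cases hv : v = 0
  · subst hv; simp [show mapply C 0 = 0 from map_zero _]
  have hnv : (0:ℝ) < ‖v‖ := norm_pos_iff.mpr hv
  have hmem : ‖mapply C ((↑(‖v‖)⁻¹ : ℂ) • v)‖ ∈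
      { a : ℝ | ∃ x : EuclideanSpace ℂ (Fin n), ‖x‖ = 1 ∧ a = ‖mapply C x‖ } := by
    refine ⟨_, ?_, rfl⟩
    rw [norm_smul]
    simp [abs_of_pos hnv, inv_mul_cancel₀ hnv.ne']
  have h1 := le_csSup (bddAbove_sigmaSet C) hmem
  rw [mapply_smul, norm_smul] at h1
  have h2 : ‖(↑(‖v‖)⁻¹ : ℂ)‖ = (‖v‖)⁻¹ := by
    simp [abs_of_pos hnv]
  rw [h2] at h1
  have h3 := mul_le_mul_of_nonneg_left h1 hnv.le
  rw [← mul_assoc, mul_inv_cancel₀ hnv.ne', one_mul] at h3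
  linarith

lemma sigmaMin_nonneg (C : Matrix (Fin n) (Fin n) ℂ) : 0 ≤ sigmaMin C := by
  apply Real.sInf_nonneg
  rintro a ⟨x, hx, rfl⟩
  exact norm_nonneg _

lemma sigmaMin_le_mapply (C : Matrix (Fin n) (Fin n) ℂ) (v : EuclideanSpace ℂ (Fin n)) :
    sigmaMin C * ‖v‖ ≤ ‖mapply C v‖ := by
  unfold sigmaMin
  by_cases hv : v = 0
  · subst hv; simp [show mapply C 0 = 0 from map_zero _]
  have hnv : (0:ℝ) < ‖v‖ := norm_pos_iff.mpr hv
  have hmem : ‖mapply C ((↑(‖v‖)⁻¹ : ℂ) • v)‖ ∈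
      { a : ℝ | ∃ x : EuclideanSpace ℂ (Fin n), ‖x‖ = 1 ∧ a = ‖mapply C x‖ } := by
    refine ⟨_, ?_, rfl⟩
    rw [norm_smul]
    simp [abs_of_pos hnv, inv_mul_cancel₀ hnv.ne']
  have h1 := csInf_le ⟨0, by rintro a ⟨x, hx, rfl⟩; exact norm_nonneg _⟩ hmem
  rw [mapply_smul, norm_smul] at h1
  have h2 : ‖(↑(‖v‖)⁻¹ : ℂ)‖ = (‖v‖)⁻¹ := by
    simp [abs_of_pos hnv]
  rw [h2] at h1
  rw [mul_comm, ← le_inv_mul_iff₀ hnv]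
  exact h1

end MatrixAux

section FinsetAux

open Finset

lemma erase_image {N : ℕ} (k : Fin N) :
    ((univ.erase k).image Fin.val) = (range N).erase k := by
  ext j
  simp only [mem_image, mem_erase, mem_univ, and_true, mem_range]
  constructor
  · rintro ⟨i, hik, rfl⟩
    exact ⟨fun hc => hik (Fin.ext hc), i.isLt⟩
  · rintro ⟨hjk, hjN⟩
    exact ⟨⟨j, hjN⟩, fun hc => hjk (by rw [← hc]), rfl⟩

lemma prod_erase_eq {N : ℕ} (k : Fin N) (f : Fin N → ℝ) (f' : ℕ → ℝ)
    (hf' : ∀ (j : ℕ) (h : j < N), f' j = f ⟨j, h⟩) :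
    ∏ i ∈ univ.erase k, f i = ∏ j ∈ (range N).erase k, f' j := by
  rw [← erase_image k, prod_image (fun i _ j _ h => Fin.ext h)]
  exact prod_congr rfl fun i _ => by rw [hf' i.val i.isLt]

lemma sum_erase_eq {N : ℕ} (k : Fin N) (f : Fin N → ℝ) (f' : ℕ → ℝ)
    (hf' : ∀ (j : ℕ) (h : j < N), f' j = f ⟨j, h⟩) :
    ∑ i ∈ univ.erase k, f i = ∑ j ∈ (range N).erase k, f' j := by
  rw [← erase_image k, sum_image (fun i _ j _ h => Fin.ext h)]
  exact sum_congr rfl fun i _ => by rw [hf' i.val i.isLt]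

lemma erase_range_split {N k : ℕ} (hk : k < N) :
    (range N).erase k = Finset.Ico 0 k ∪ Finset.Ico (k+1) N := by
  ext j
  simp only [mem_erase, mem_range, mem_union, mem_Ico]
  omega

lemma disj_split {N k : ℕ} :
    Disjoint (Finset.Ico 0 k) (Finset.Ico (k+1) N) := by
  rw [Finset.disjoint_left]
  intro a ha hb
  simp only [mem_Ico] at ha hb
  omega

lemma sum_erase_split {N k : ℕ} (hk : k < N) (g : ℕ → ℝ) :
    ∑ j ∈ (range N).erase k, g j
      = ∑ j ∈ Finset.Ico 0 k, g j + ∑ j ∈ Finset.Ico (k+1) N, g j := by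
  rw [erase_range_split hk, sum_union disj_split]

lemma prod_erase_split {N k : ℕ} (hk : k < N) (g : ℕ → ℝ) :
    ∏ j ∈ (range N).erase k, g j
      = (∏ j ∈ Finset.Ico 0 k, g j) * ∏ j ∈ Finset.Ico (k+1) N, g j := by
  rw [erase_range_split hk, prod_union disj_split]

end FinsetAux

open Finset

/-- nonsingularity via an annular-sector over-approximation. -/
theorem stmt6 {n N : ℕ} (A : Fin N → Matrix (Fin n) (Fin n) ℂ) (α : Fin N → ℝ) (k : Fin N)
    (h : (-1 : ℂ) ∉ SRGt (α k) (A k) *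
      { z : ℂ | ‖z‖ ∈
          Set.Icc (∏ i ∈ Finset.univ.erase k, sigmaMin (A i))
            (∏ i ∈ Finset.univ.erase k, sigmaMax (A i)) ∧
        ∃ φ : ℝ, φ ∈ Set.Icc (∑ i ∈ Finset.univ.erase k, (α i - phaseSpread (α i) (A i)))
            (∑ i ∈ Finset.univ.erase k, (α i + phaseSpread (α i) (A i))) ∧
          z = (↑‖z‖ : ℂ) * Complex.exp ((↑φ : ℂ) * Complex.I) }) :
    IsUnit (1 + (List.ofFn A).prod) := by
  by_contra hcon
  have hdet : (1 + (List.ofFn A).prod).det = 0 := by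
    by_contra hd
    exact hcon ((Matrix.isUnit_iff_isUnit_det _).mpr (isUnit_iff_ne_zero.mpr hd))
  obtain ⟨x, hx0, hxe⟩ := (Matrix.exists_mulVec_eq_zero_iff).mpr hdet
  have hMx : (List.ofFn A).prod.mulVec x = -x := by
    rw [Matrix.add_mulVec, Matrix.one_mulVec] at hxe
    rwa [add_comm, add_eq_zero_iff_eq_neg] at hxe
  have hn : 0 < n := by
    obtain ⟨i, -⟩ := Function.ne_iff.mp hx0
    exact i.pos
  have hN : (k:ℕ) < N := k.isLt
  set ℓ : List (Matrix (Fin n) (Fin n) ℂ) := List.ofFn A with hℓ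
  have hlen : ℓ.length = N := List.length_ofFn
  set xE : EuclideanSpace ℂ (Fin n) := (WithLp.equiv 2 (Fin n → ℂ)).symm x with hxEdef
  have hxE0 : xE ≠ 0 := by
    intro hc
    apply hx0
    have := congrArg (WithLp.equiv 2 (Fin n → ℂ)) hc
    simpa [hxEdef] using this
  set A' : ℕ → Matrix (Fin n) (Fin n) ℂ := fun j => if h : j < N then A ⟨j,h⟩ else 1 with hA'
  set α' : ℕ → ℝ := fun j => if h : j < N then α ⟨j,h⟩ else 0 with hα'
  have hA'k : A' (k:ℕ) = A k := by simp [hA', hN]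
  have hα'k : α' (k:ℕ) = α k := by simp [hα', hN]
  set v : ℕ → EuclideanSpace ℂ (Fin n) := fun j => mapply ((ℓ.drop j).prod) xE with hv
  -- basic facts about v
  have hv0 : v 0 = -xE := by
    simp only [hv, List.drop_zero]
    rw [mapply, Matrix.toEuclideanLin_apply, hxEdef]
    change WithLp.toLp 2 (ℓ.prod.mulVec x) = -(WithLp.toLp 2 x)
    rw [hMx]
    simp
  have hvstep : ∀ j, j < N → v j = mapply (A' j) (v (j+1)) := by
    intro j hj
    have hjl : j < ℓ.length := by rw [hlen]; exact hj
    have hdrop : List.drop j ℓ = A' j :: List.drop (j+1) ℓ := by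
      rw [hℓ, List.drop_eq_getElem_cons (by simpa using hj)]
      congr 1
      rw [List.getElem_ofFn]
      simp [hA', hj]
    simp only [hv, hdrop, List.prod_cons, mapply_mul]
  have hvN : v N = xE := by
    simp only [hv, List.drop_eq_nil_of_le (le_of_eq hlen), List.prod_nil, mapply_one]
  have hvne : ∀ j, v j ≠ 0 := by
    intro j hc
    have hsplit : v 0 = mapply ((ℓ.take j).prod) (v j) := by
      simp only [hv, List.drop_zero]
      rw [← mapply_mul, List.prod_take_mul_prod_drop]
    rw [hc, show mapply ((ℓ.take j).prod) (0 : EuclideanSpace ℂ (Fin n)) = 0 from map_zero _]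
      at hsplit
    rw [hv0] at hsplit
    exact hxE0 (neg_eq_zero.mp hsplit)
  set σs : ℕ → ℝ := fun j => ∑ i ∈ Finset.Ico j N, α' i with hσs
  have hσstep : ∀ j, j < N → σs j = α' j + σs (j+1) := by
    intro j hj
    simp only [hσs]
    exact Finset.sum_eq_sum_Ico_succ_bot hj α'
  have hσN : σs N = 0 := by simp only [hσs]; simp
  set g : ℕ → EuclideanSpace ℂ (Fin n) :=
    fun j => Complex.exp (-(σs j : ℂ) * Complex.I) • v j with hgdef
  have hgne : ∀ j, g j ≠ 0 := fun j =>
    smul_ne_zero (Complex.exp_ne_zero _) (hvne j)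
  set θ' : ℕ → ℝ := fun j => angleTheta (α' j) (v (j+1)) (v j) with hθ'
  have hθnn : ∀ j, 0 ≤ θ' j := fun j => (angleTheta_mem _ _ _).1
  have hrangstep : ∀ j, j < N → rang (g (j+1)) (g j) = θ' j := by
    intro j hj
    have hfact : g j = Complex.exp (-(σs (j+1) : ℂ) * Complex.I) •
        (Complex.exp (-(α' j : ℂ) * Complex.I) • v j) := by
      simp only [hgdef]
      rw [smul_smul, ← Complex.exp_add, hσstep j hj]
      push_cast
      ring_nf
    have hgj1 : g (j+1) = Complex.exp (-(σs (j+1) : ℂ) * Complex.I) • v (j+1) := by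
      simp only [hgdef]
    rw [hfact, hgj1, rang_smul_smul (abs_exp_neg_theta (σs (j+1))), hθ']
    exact (angleTheta_eq_rang (α' j) (hvne (j+1)) (hvne j)).symm
  set Γ' : ℕ → ℝ := fun j => phaseSpread (α' j) (A' j) with hΓ'
  have hθΓ : ∀ j, j < N → θ' j ≤ Γ' j := by
    intro j hj
    simp only [hθ', hΓ']
    rw [hvstep j hj]
    exact angleTheta_le_phaseSpread (α' j) (A' j) (hvne (j+1))
  -- endpoint angle
  have hgN : g N = xE := by
    simp only [hgdef, hσN, hvN]
    norm_num
  have hg0 : g 0 = (-Complex.exp (-(σs 0 : ℂ) * Complex.I)) • xE := by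
    simp only [hgdef, hv0, smul_neg, neg_smul]
  have hD : rang (g N) (g 0) = Real.arccos (-(Real.cos (σs 0))) := by
    rw [hgN, hg0, rang_smul_self _ hxE0]
    · congr 1
      have : (-(σs 0 : ℂ)) * Complex.I = ((-(σs 0) : ℝ) : ℂ) * Complex.I := by push_cast; ring
      rw [this, Complex.neg_re, Complex.exp_ofReal_mul_I_re, Real.cos_neg]
    · rw [norm_neg]
      exact abs_exp_neg_theta _
  -- the reduced angle r
  set t : ℝ := Real.pi - σs 0 with ht
  set m : ℤ := round (t / (2 * Real.pi)) with hm
  set r : ℝ := t - m * (2 * Real.pi) with hr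
  have hrabs : |r| ≤ Real.pi := by
    have h2pi : (0:ℝ) < 2 * Real.pi := by positivity
    have h1 : r = 2 * Real.pi * (t / (2 * Real.pi) - m) := by
      rw [hr]
      field_simp
    rw [h1, abs_mul, abs_of_pos h2pi]
    have := abs_sub_round (t / (2 * Real.pi))
    calc 2 * Real.pi * |t / (2 * Real.pi) - ↑m| ≤ 2 * Real.pi * (1/2) := by
          apply mul_le_mul_of_nonneg_left _ h2pi.le
          rw [hm]
          exact this
      _ = Real.pi := by ring
  have hDr : Real.arccos (-(Real.cos (σs 0))) = |r| := by
    rw [show -(Real.cos (σs 0)) = Real.cos t by rw [ht, Real.cos_pi_sub]]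
    rw [show Real.cos t = Real.cos r by rw [hr, Real.cos_sub_int_mul_two_pi]]
    rw [← Real.cos_abs r]
    exact Real.arccos_cos (abs_nonneg r) hrabs
  -- chain inequalities
  set G' : ℝ := ∑ j ∈ (range N).erase (k:ℕ), Γ' j with hG'
  have hsum_erase_le : ∑ j ∈ (range N).erase (k:ℕ), θ' j ≤ G' := by
    rw [hG']
    apply Finset.sum_le_sum
    intro j hj
    exact hθΓ j (mem_range.mp (mem_of_mem_erase hj))
  have hA1 : |r| ≤ θ' (k:ℕ) + G' := by
    have hchain := rang_chain g hgne 0 N (Nat.zero_le N)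
    rw [hD, hDr] at hchain
    have hsum : ∑ j ∈ Finset.Ico 0 N, rang (g (j+1)) (g j) = ∑ j ∈ range N, θ' j := by
      rw [← Finset.range_eq_Ico]
      exact Finset.sum_congr rfl fun j hj => hrangstep j (mem_range.mp hj)
    rw [hsum] at hchain
    rw [← Finset.add_sum_erase (range N) θ' (mem_range.mpr hN)] at hchain
    linarith [hchain, hsum_erase_le]
  have hA2 : θ' (k:ℕ) ≤ |r| + G' := by
    have h1 : rang (g ((k:ℕ)+1)) (g (k:ℕ)) = θ' (k:ℕ) := hrangstep (k:ℕ) hN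
    have htri : rang (g ((k:ℕ)+1)) (g (k:ℕ)) ≤
        rang (g ((k:ℕ)+1)) (g N) + (rang (g N) (g 0) + rang (g 0) (g (k:ℕ))) :=
      le_trans (rang_triangle _ (g N) _)
        (by linarith [rang_triangle (g N) (g 0) (g (k:ℕ))])
    have hc1 : rang (g ((k:ℕ)+1)) (g N) ≤ ∑ j ∈ Finset.Ico ((k:ℕ)+1) N, θ' j := by
      rw [rang_comm]
      refine le_trans (rang_chain g hgne ((k:ℕ)+1) N hN) ?_
      apply le_of_eq
      exact Finset.sum_congr rfl fun j hj => hrangstep j (mem_Ico.mp hj).2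
    have hc2 : rang (g 0) (g (k:ℕ)) ≤ ∑ j ∈ Finset.Ico 0 (k:ℕ), θ' j := by
      rw [rang_comm]
      refine le_trans (rang_chain g hgne 0 (k:ℕ) (Nat.zero_le _)) ?_
      apply le_of_eq
      refine Finset.sum_congr rfl fun j hj => hrangstep j ?_
      have := (mem_Ico.mp hj).2
      omega
    have hΓsplit : ∑ j ∈ Finset.Ico 0 (k:ℕ), Γ' j + ∑ j ∈ Finset.Ico ((k:ℕ)+1) N, Γ' j
        = G' := by
      rw [hG', sum_erase_split hN]
    have hb1 : ∑ j ∈ Finset.Ico ((k:ℕ)+1) N, θ' j ≤ ∑ j ∈ Finset.Ico ((k:ℕ)+1) N, Γ' j :=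
      Finset.sum_le_sum fun j hj => hθΓ j (mem_Ico.mp hj).2
    have hb2 : ∑ j ∈ Finset.Ico 0 (k:ℕ), θ' j ≤ ∑ j ∈ Finset.Ico 0 (k:ℕ), Γ' j :=
      Finset.sum_le_sum fun j hj => hθΓ j (by have := (mem_Ico.mp hj).2; omega)
    rw [hD, hDr] at htri
    linarith
  -- norm chains
  have hub : ∀ d a, a + d ≤ N →
      ‖v a‖ ≤ (∏ j ∈ Finset.Ico a (a+d), sigmaMax (A' j)) * ‖v (a+d)‖ := by
    intro d
    induction d with
    | zero => intro a _; simp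
    | succ d ih =>
        intro a ha
        have h1 : a < N := by omega
        have h2 : a < a + (d+1) := by omega
        rw [Finset.prod_eq_prod_Ico_succ_bot h2]
        have h3 := ih (a+1) (by omega)
        have h4 : ‖v a‖ ≤ sigmaMax (A' a) * ‖v (a+1)‖ := by
          rw [hvstep a h1]
          exact mapply_le_sigmaMax _ _
        have h5 : sigmaMax (A' a) * ‖v (a+1)‖ ≤
            sigmaMax (A' a) * ((∏ j ∈ Finset.Ico (a+1) (a+1+d), sigmaMax (A' j)) * ‖v (a+1+d)‖) :=
          mul_le_mul_of_nonneg_left h3 (sigmaMax_nonneg hn _)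
        have h6 : a+1+d = a+(d+1) := by omega
        rw [h6] at h5
        calc ‖v a‖ ≤ _ := h4
          _ ≤ _ := h5
          _ = _ := by ring
  have hlb : ∀ d a, a + d ≤ N →
      (∏ j ∈ Finset.Ico a (a+d), sigmaMin (A' j)) * ‖v (a+d)‖ ≤ ‖v a‖ := by
    intro d
    induction d with
    | zero => intro a _; simp
    | succ d ih =>
        intro a ha
        have h1 : a < N := by omega
        have h2 : a < a + (d+1) := by omega
        rw [Finset.prod_eq_prod_Ico_succ_bot h2]
        have h3 := ih (a+1) (by omega)
        have h4 : sigmaMin (A' a) * ‖v (a+1)‖ ≤ ‖v a‖ := by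
          rw [hvstep a h1]
          exact sigmaMin_le_mapply _ _
        have h5 : sigmaMin (A' a) * ((∏ j ∈ Finset.Ico (a+1) (a+1+d), sigmaMin (A' j)) * ‖v (a+1+d)‖)
            ≤ sigmaMin (A' a) * ‖v (a+1)‖ :=
          mul_le_mul_of_nonneg_left h3 (sigmaMin_nonneg _)
        have h6 : a+1+d = a+(d+1) := by omega
        rw [h6] at h5
        calc (sigmaMin (A' a) * ∏ j ∈ Finset.Ico (a+1) (a+(d+1)), sigmaMin (A' j)) * ‖v (a+(d+1))‖
            = sigmaMin (A' a) * ((∏ j ∈ Finset.Ico (a+1) (a+(d+1)), sigmaMin (A' j)) * ‖v (a+(d+1))‖) := by ring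
          _ ≤ sigmaMin (A' a) * ‖v (a+1)‖ := h5
          _ ≤ ‖v a‖ := h4
  obtain ⟨d2, hd2⟩ : ∃ d, (k:ℕ)+1+d = N := ⟨N - ((k:ℕ)+1), by omega⟩
  obtain ⟨d1, hd1⟩ : ∃ d, 0+d = (k:ℕ) := ⟨(k:ℕ), by omega⟩
  have hnx0 : ‖v 0‖ = ‖xE‖ := by rw [hv0, norm_neg]
  have hu_ub : ‖v ((k:ℕ)+1)‖ ≤ (∏ j ∈ Finset.Ico ((k:ℕ)+1) N, sigmaMax (A' j)) * ‖xE‖ := by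
    have := hub d2 ((k:ℕ)+1) (by omega)
    rwa [hd2, hvN] at this
  have hx_ub : ‖xE‖ ≤ (∏ j ∈ Finset.Ico 0 (k:ℕ), sigmaMax (A' j)) * ‖v (k:ℕ)‖ := by
    have := hub d1 0 (by omega)
    rw [hd1] at this
    simpa [hnx0] using this
  have hu_lb : (∏ j ∈ Finset.Ico ((k:ℕ)+1) N, sigmaMin (A' j)) * ‖xE‖ ≤ ‖v ((k:ℕ)+1)‖ := by
    have := hlb d2 ((k:ℕ)+1) (by omega)
    rwa [hd2, hvN] at this
  have hx_lb : (∏ j ∈ Finset.Ico 0 (k:ℕ), sigmaMin (A' j)) * ‖v (k:ℕ)‖ ≤ ‖xE‖ := by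
    have := hlb d1 0 (by omega)
    rw [hd1] at this
    rw [hnx0] at this
    simpa using this
  have hvkpos : (0:ℝ) < ‖v (k:ℕ)‖ := norm_pos_iff.mpr (hvne _)
  have hvk1pos : (0:ℝ) < ‖v ((k:ℕ)+1)‖ := norm_pos_iff.mpr (hvne _)
  set Rz : ℝ := ‖v ((k:ℕ)+1)‖ / ‖v (k:ℕ)‖ with hRz
  have hRzpos : 0 < Rz := div_pos hvk1pos hvkpos
  have hPmax : ∏ i ∈ Finset.univ.erase k, sigmaMax (A i)
      = (∏ j ∈ Finset.Ico 0 (k:ℕ), sigmaMax (A' j)) * ∏ j ∈ Finset.Ico ((k:ℕ)+1) N, sigmaMax (A' j) := by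
    rw [prod_erase_eq k (fun i => sigmaMax (A i)) (fun j => sigmaMax (A' j))
      (fun j hj => by rw [hA']; simp [hj]), prod_erase_split hN]
  have hPmin : ∏ i ∈ Finset.univ.erase k, sigmaMin (A i)
      = (∏ j ∈ Finset.Ico 0 (k:ℕ), sigmaMin (A' j)) * ∏ j ∈ Finset.Ico ((k:ℕ)+1) N, sigmaMin (A' j) := by
    rw [prod_erase_eq k (fun i => sigmaMin (A i)) (fun j => sigmaMin (A' j))
      (fun j hj => by rw [hA']; simp [hj]), prod_erase_split hN]
  have hRz_ub : Rz ≤ ∏ i ∈ Finset.univ.erase k, sigmaMax (A i) := by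
    rw [hRz, div_le_iff₀ hvkpos, hPmax]
    calc ‖v ((k:ℕ)+1)‖ ≤ (∏ j ∈ Finset.Ico ((k:ℕ)+1) N, sigmaMax (A' j)) * ‖xE‖ := hu_ub
      _ ≤ (∏ j ∈ Finset.Ico ((k:ℕ)+1) N, sigmaMax (A' j)) *
          ((∏ j ∈ Finset.Ico 0 (k:ℕ), sigmaMax (A' j)) * ‖v (k:ℕ)‖) :=
        mul_le_mul_of_nonneg_left hx_ub (Finset.prod_nonneg fun j _ => sigmaMax_nonneg hn _)
      _ = _ := by ring
  have hRz_lb : ∏ i ∈ Finset.univ.erase k, sigmaMin (A i) ≤ Rz := by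
    rw [hRz, le_div_iff₀ hvkpos, hPmin]
    calc (∏ j ∈ Finset.Ico 0 (k:ℕ), sigmaMin (A' j)) *
          (∏ j ∈ Finset.Ico ((k:ℕ)+1) N, sigmaMin (A' j)) * ‖v (k:ℕ)‖
        = (∏ j ∈ Finset.Ico ((k:ℕ)+1) N, sigmaMin (A' j)) *
          ((∏ j ∈ Finset.Ico 0 (k:ℕ), sigmaMin (A' j)) * ‖v (k:ℕ)‖) := by ring
      _ ≤ (∏ j ∈ Finset.Ico ((k:ℕ)+1) N, sigmaMin (A' j)) * ‖xE‖ :=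
        mul_le_mul_of_nonneg_left hx_lb (Finset.prod_nonneg fun j _ => sigmaMin_nonneg _)
      _ ≤ ‖v ((k:ℕ)+1)‖ := hu_lb
  -- phase bookkeeping
  set β : ℝ := ∑ i ∈ Finset.univ.erase k, α i with hβ
  set G : ℝ := ∑ i ∈ Finset.univ.erase k, phaseSpread (α i) (A i) with hG
  have hGG' : G = G' := by
    rw [hG, hG', sum_erase_eq k (fun i => phaseSpread (α i) (A i)) Γ'
      (fun j hj => by rw [hΓ', hA', hα']; simp [hj])]
  have hβ' : β = ∑ j ∈ (range N).erase (k:ℕ), α' j :=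
    sum_erase_eq k α α' (fun j hj => by rw [hα']; simp [hj])
  have hσ0 : σs 0 = α k + β := by
    simp only [hσs]
    rw [← Finset.range_eq_Ico,
      ← Finset.add_sum_erase (range N) α' (mem_range.mpr hN), hα'k, hβ']
  -- the choice of sign and phase
  set θk : ℝ := θ' (k:ℕ) with hθk
  set s : ℝ := if 0 ≤ r then 1 else -1 with hs
  set φ : ℝ := Real.pi - (α k + s * θk) - m * (2 * Real.pi) with hφ
  have hφβ : φ - β = r - s * θk := by
    rw [hφ, hr, ht, hσ0]; ring
  have hφmem : β - G ≤ φ ∧ φ ≤ β + G := by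
    rw [hGG']
    rcases le_or_gt 0 r with hr0 | hr0
    · have hsr : s = 1 := if_pos hr0
      rw [_root_.abs_of_nonneg hr0] at hA1 hA2
      rw [hsr] at hφβ
      constructor <;> linarith
    · have hsr : s = -1 := if_neg (not_le.mpr hr0)
      rw [_root_.abs_of_neg hr0] at hA1 hA2
      rw [hsr] at hφβ
      constructor <;> linarith
  -- the SRG element
  have hvk_eq : v (k:ℕ) = mapply (A k) (v ((k:ℕ)+1)) := by
    rw [hvstep _ hN, hA'k]
  have hθk_eq : θk = angleTheta (α k) (v ((k:ℕ)+1)) (mapply (A k) (v ((k:ℕ)+1))) := by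
    simp only [hθk, hθ']
    rw [hα'k, ← hvk_eq]
  set w : ℂ := (↑(‖mapply (A k) (v ((k:ℕ)+1))‖ / ‖v ((k:ℕ)+1)‖) : ℂ) *
      Complex.exp ((↑(α k + s * θk) : ℂ) * Complex.I) with hw
  have hwmem : w ∈ SRGt (α k) (A k) := by
    refine ⟨v ((k:ℕ)+1), hvne _, ?_⟩
    rcases le_or_gt 0 r with hr0 | hr0
    · left
      rw [hw, hs, if_pos hr0, one_mul, ← hθk_eq]
    · right
      rw [hw, hs, if_neg (not_le.mpr hr0), ← hθk_eq]
      ring_nf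
  set z : ℂ := (↑Rz : ℂ) * Complex.exp ((↑φ : ℂ) * Complex.I) with hzdef
  have habsz : ‖z‖ = Rz := by
    rw [hzdef, norm_mul, Complex.norm_real, Real.norm_eq_abs, abs_of_pos hRzpos,
      Complex.norm_exp_ofReal_mul_I, mul_one]
  have hzmem : z ∈ { z : ℂ | ‖z‖ ∈
      Set.Icc (∏ i ∈ Finset.univ.erase k, sigmaMin (A i))
        (∏ i ∈ Finset.univ.erase k, sigmaMax (A i)) ∧
      ∃ φ' : ℝ, φ' ∈ Set.Icc (∑ i ∈ Finset.univ.erase k, (α i - phaseSpread (α i) (A i)))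
          (∑ i ∈ Finset.univ.erase k, (α i + phaseSpread (α i) (A i))) ∧
        z = (↑‖z‖ : ℂ) * Complex.exp ((↑φ' : ℂ) * Complex.I) } := by
    refine ⟨?_, φ, ?_, ?_⟩
    · rw [habsz]
      exact ⟨hRz_lb, hRz_ub⟩
    · rw [Finset.sum_sub_distrib, Finset.sum_add_distrib, ← hβ, ← hG]
      exact hφmem
    · rw [habsz]
  have hwz : w * z = -1 := by
    rw [hw, hzdef, ← hvk_eq]
    have h1 : ((‖v (k:ℕ)‖ / ‖v ((k:ℕ)+1)‖ : ℝ) : ℂ) * ((Rz : ℝ) : ℂ) = 1 := by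
      rw [← Complex.ofReal_mul]
      have : (‖v (k:ℕ)‖ / ‖v ((k:ℕ)+1)‖) * Rz = 1 := by
        rw [hRz]
        field_simp
      rw [this, Complex.ofReal_one]
    have h2 : Complex.exp ((↑(α k + s*θk):ℂ) * Complex.I) *
        Complex.exp ((↑φ:ℂ) * Complex.I) = -1 := by
      rw [← Complex.exp_add]
      have harg : (↑(α k + s*θk):ℂ) * Complex.I + (↑φ:ℂ) * Complex.I
          = ↑Real.pi * Complex.I - ↑m * (2 * ↑Real.pi * Complex.I) := by
        rw [hφ]; push_cast; ring
      rw [harg, Complex.exp_sub, Complex.exp_int_mul_two_pi_mul_I,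
        Complex.exp_pi_mul_I, div_one]
    rw [mul_mul_mul_comm, h1, h2, one_mul]
  exact h (hwz ▸ Set.mul_mem_mul hwmem hzmem)
end

section
/- Let 𝒜, ℬ ⊂ ℂ^{n×n} be sets of matrices. If there exists θ ∈ ℝ such that ℬ satisfies the θ-chord property, then SRG_θ(𝒜 + ℬ) ⊂ SRG_θ(𝒜) + SRG_θ(ℬ), where 𝒜 + ℬ = {A + B : A ∈ 𝒜, B ∈ ℬ} and the sum on the right is the elementwise sum of subsets of ℂ. -/
open scoped Pointwise Classical
open Complex

noncomputable section Aux

def aV {n : ℕ} (θ : ℝ) (x y : EuclideanSpace ℂ (Fin n)) : ℝ :=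
  (inner ℂ x ((Complex.exp (-(θ : ℂ) * Complex.I)) • y) : ℂ).re / (‖x‖ * ‖x‖)

def bV {n : ℕ} (θ : ℝ) (x y : EuclideanSpace ℂ (Fin n)) : ℝ :=
  ‖(Complex.exp (-(θ : ℂ) * Complex.I)) • y - ((aV θ x y : ℝ) : ℂ) • x‖ / ‖x‖

lemma exp_norm_one (θ : ℝ) : ‖Complex.exp (-(θ : ℂ) * Complex.I)‖ = 1 := by
  have : (-(θ : ℂ)) * Complex.I = ((-θ : ℝ) : ℂ) * Complex.I := by push_cast; ring
  rw [this, Complex.norm_exp_ofReal_mul_I]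

lemma aV_abs_le {n : ℕ} (θ : ℝ) (x y : EuclideanSpace ℂ (Fin n)) (hx : x ≠ 0) :
    |aV θ x y| ≤ ‖y‖ / ‖x‖ := by
  have hxn : (0:ℝ) < ‖x‖ := norm_pos_iff.mpr hx
  have h1 : |(inner ℂ x ((Complex.exp (-(θ : ℂ) * Complex.I)) • y) : ℂ).re| ≤ ‖x‖ * ‖y‖ := by
    calc |(inner ℂ x ((Complex.exp (-(θ : ℂ) * Complex.I)) • y) : ℂ).re|
        ≤ ‖(inner ℂ x ((Complex.exp (-(θ : ℂ) * Complex.I)) • y) : ℂ)‖ :=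
          Complex.abs_re_le_norm _
      _ = ‖(inner ℂ x ((Complex.exp (-(θ : ℂ) * Complex.I)) • y) : ℂ)‖ := rfl
      _ ≤ ‖x‖ * ‖(Complex.exp (-(θ : ℂ) * Complex.I)) • y‖ := norm_inner_le_norm _ _
      _ = ‖x‖ * ‖y‖ := by rw [norm_smul, exp_norm_one]; ring
  rw [aV, abs_div, abs_of_pos (by positivity : (0:ℝ) < ‖x‖ * ‖x‖)]
  rw [div_le_div_iff₀ (by positivity) hxn]
  calc |(inner ℂ x ((Complex.exp (-(θ : ℂ) * Complex.I)) • y) : ℂ).re| * ‖x‖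
      ≤ (‖x‖ * ‖y‖) * ‖x‖ := by nlinarith
    _ = ‖y‖ * (‖x‖ * ‖x‖) := by ring

lemma bV_sq {n : ℕ} (θ : ℝ) (x y : EuclideanSpace ℂ (Fin n)) (hx : x ≠ 0) :
    (bV θ x y)^2 = (‖y‖/‖x‖)^2 - (aV θ x y)^2 := by
  have hxn : (0:ℝ) < ‖x‖ := norm_pos_iff.mpr hx
  set u := (Complex.exp (-(θ : ℂ) * Complex.I)) • y with hu
  set a := aV θ x y with ha
  have hre : (inner ℂ x u : ℂ).re = a * (‖x‖ * ‖x‖) := by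
    rw [ha, aV, ← hu]; field_simp
  have hnormu : ‖u‖ = ‖y‖ := by rw [hu, norm_smul, exp_norm_one, one_mul]
  have hkey : ‖u - ((a:ℝ):ℂ) • x‖^2 = ‖u‖^2 - a^2 * ‖x‖^2 := by
    have h2 : ((inner ℂ u (((a:ℝ):ℂ) • x)) : ℂ).re = a * (a * (‖x‖*‖x‖)) := by
      rw [inner_smul_right]
      rw [← inner_conj_symm u x]
      simp only [Complex.re_ofReal_mul, Complex.conj_re, hre]
    have hns := @norm_sub_sq ℂ _ _ _ _ u (((a:ℝ):ℂ) • x)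
    simp only [RCLike.re_to_complex] at hns
    have h3 : ‖(((a:ℝ):ℂ)) • x‖^2 = a^2 * ‖x‖^2 := by
      rw [norm_smul, mul_pow, Complex.norm_real, Real.norm_eq_abs, _root_.sq_abs]
    rw [hns, h2, h3]; ring
  rw [bV, div_pow, ← hu, ← ha, hkey, hnormu]
  field_simp

lemma bV_nonneg {n : ℕ} (θ : ℝ) (x y : EuclideanSpace ℂ (Fin n)) : 0 ≤ bV θ x y := by
  rw [bV]; positivity

lemma bV_eq_sqrt {n : ℕ} (θ : ℝ) (x y : EuclideanSpace ℂ (Fin n)) (hx : x ≠ 0) :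
    bV θ x y = Real.sqrt ((‖y‖/‖x‖)^2 - (aV θ x y)^2) := by
  rw [← bV_sq θ x y hx, Real.sqrt_sq (bV_nonneg θ x y)]

end Aux

noncomputable section MyAux

lemma pointFormula {n : ℕ} (θ : ℝ) (x y : EuclideanSpace ℂ (Fin n)) (hx : x ≠ 0) :
    (↑(‖y‖ / ‖x‖) : ℂ) * Complex.exp ((↑(θ + angleTheta θ x y) : ℂ) * Complex.I)
      = Complex.exp ((θ:ℂ) * Complex.I) * (↑(aV θ x y) + ↑(bV θ x y) * Complex.I)
    ∧ (↑(‖y‖ / ‖x‖) : ℂ) * Complex.exp ((↑(θ - angleTheta θ x y) : ℂ) * Complex.I)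
      = Complex.exp ((θ:ℂ) * Complex.I) * (↑(aV θ x y) - ↑(bV θ x y) * Complex.I) := by
  have hxn : (0:ℝ) < ‖x‖ := norm_pos_iff.mpr hx
  set α := angleTheta θ x y with hα
  set r := ‖y‖ / ‖x‖ with hrdef
  set a := aV θ x y with hadef
  set b := bV θ x y with hbdef
  have key1 : r * Real.cos α = a ∧ r * Real.sin α = b := by
    by_cases hy : y = 0
    · have hα0 : α = 0 := by rw [hα, angleTheta]; simp [hy]
      have ha0 : a = 0 := by rw [hadef, aV]; simp [hy]
      have hb0 : b = 0 := by
        rw [hbdef, bV, ← hadef, ha0]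
        simp [hy]
      have hr0 : r = 0 := by rw [hrdef, hy]; simp
      rw [hα0, ha0, hb0, hr0]; simp
    · have hyn : (0:ℝ) < ‖y‖ := norm_pos_iff.mpr hy
      set c : ℝ := (inner ℂ x ((Complex.exp (-(θ : ℂ) * Complex.I)) • y) : ℂ).re / (‖x‖ * ‖y‖)
        with hc
      have hαc : α = Real.arccos c := by rw [hα, angleTheta]; simp [hx, hy, hc]
      have hac : a = c * r := by
        rw [hadef, aV, hc, hrdef]; field_simp
      have habs : |a| ≤ r := aV_abs_le θ x y hx
      have hrpos : 0 < r := by rw [hrdef]; positivity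
      have hc1 : |c| ≤ 1 := by
        rw [abs_le]; constructor <;> [nlinarith [abs_le.mp habs]; nlinarith [abs_le.mp habs]]
      have hc1' := abs_le.mp hc1
      constructor
      · rw [hαc, Real.cos_arccos hc1'.1 hc1'.2, hac]; ring
      · rw [hαc, Real.sin_arccos, hbdef, bV_eq_sqrt θ x y hx, ← hrdef, ← hadef, hac]
        rw [show r * Real.sqrt (1 - c^2) = Real.sqrt (r^2) * Real.sqrt (1 - c^2) by
          rw [Real.sqrt_sq hrpos.le]]
        rw [← Real.sqrt_mul (by positivity)]
        congr 1; ring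
  obtain ⟨k1, k2⟩ := key1
  have k1c : (r:ℂ) * (Real.cos α : ℂ) = (a:ℂ) := by exact_mod_cast congrArg Complex.ofReal k1
  have k2c : (r:ℂ) * (Real.sin α : ℂ) = (b:ℂ) := by exact_mod_cast congrArg Complex.ofReal k2
  have hsplit : ∀ s : ℝ, Complex.exp ((↑(θ + s):ℂ) * Complex.I)
      = Complex.exp ((θ:ℂ)*Complex.I) * ((Real.cos s : ℂ) + (Real.sin s : ℂ) * Complex.I) := by
    intro s
    rw [show ((↑(θ + s):ℂ) * Complex.I) = (θ:ℂ)*Complex.I + (s:ℂ)*Complex.I by push_cast; ring,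
      Complex.exp_add]
    congr 1
    rw [Complex.exp_mul_I, Complex.ofReal_cos, Complex.ofReal_sin]
  constructor
  · rw [hsplit α]
    linear_combination Complex.exp ((θ:ℂ)*Complex.I) * k1c
      + Complex.exp ((θ:ℂ)*Complex.I) * Complex.I * k2c
  · rw [show (↑(θ - α):ℂ) = (↑(θ + (-α)):ℂ) by push_cast; ring, hsplit (-α),
      Real.cos_neg, Real.sin_neg, Complex.ofReal_neg]
    linear_combination Complex.exp ((θ:ℂ)*Complex.I) * k1c
      - Complex.exp ((θ:ℂ)*Complex.I) * Complex.I * k2c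

lemma mem_SRGt_plus {n : ℕ} (θ : ℝ) (M : Matrix (Fin n) (Fin n) ℂ)
    (x : EuclideanSpace ℂ (Fin n)) (hx : x ≠ 0) :
    Complex.exp ((θ:ℂ)*Complex.I) *
      (↑(aV θ x (mapply M x)) + ↑(bV θ x (mapply M x)) * Complex.I) ∈ SRGt θ M :=
  ⟨x, hx, Or.inl (pointFormula θ x (mapply M x) hx).1.symm⟩

lemma mem_SRGt_minus {n : ℕ} (θ : ℝ) (M : Matrix (Fin n) (Fin n) ℂ)
    (x : EuclideanSpace ℂ (Fin n)) (hx : x ≠ 0) :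
    Complex.exp ((θ:ℂ)*Complex.I) *
      (↑(aV θ x (mapply M x)) - ↑(bV θ x (mapply M x)) * Complex.I) ∈ SRGt θ M :=
  ⟨x, hx, Or.inr (pointFormula θ x (mapply M x) hx).2.symm⟩

lemma mapply_add {n : ℕ} (A B : Matrix (Fin n) (Fin n) ℂ) (x : EuclideanSpace ℂ (Fin n)) :
    mapply (A + B) x = mapply A x + mapply B x := by
  simp [mapply]

lemma aV_add {n : ℕ} (θ : ℝ) (x y y' : EuclideanSpace ℂ (Fin n)) :
    aV θ x (y + y') = aV θ x y + aV θ x y' := by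
  rw [aV, aV, aV, smul_add, inner_add_right, Complex.add_re, add_div]

lemma bV_vec_add {n : ℕ} (θ : ℝ) (x y y' : EuclideanSpace ℂ (Fin n)) :
    (Complex.exp (-(θ : ℂ) * Complex.I)) • (y + y') - ((aV θ x (y + y') : ℝ) : ℂ) • x
      = ((Complex.exp (-(θ : ℂ) * Complex.I)) • y - ((aV θ x y : ℝ) : ℂ) • x)
        + ((Complex.exp (-(θ : ℂ) * Complex.I)) • y' - ((aV θ x y' : ℝ) : ℂ) • x) := by
  rw [aV_add, smul_add]
  push_cast
  rw [add_smul]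
  abel

lemma bV_diff_le {n : ℕ} (θ : ℝ) (x y y' : EuclideanSpace ℂ (Fin n)) (hx : x ≠ 0) :
    |bV θ x (y + y') - bV θ x y| ≤ bV θ x y' := by
  have hxn : (0:ℝ) < ‖x‖ := norm_pos_iff.mpr hx
  rw [bV, bV, bV, div_sub_div_same, abs_div, abs_of_pos hxn]
  gcongr
  rw [bV_vec_add θ x y y']
  refine (abs_norm_sub_norm_le _ _).trans ?_
  rw [add_sub_cancel_left]

lemma conj_point (θ a b : ℝ) :
    (starRingEnd ℂ) (Complex.exp ((θ:ℂ)*Complex.I) * (↑a + ↑b*Complex.I))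
        * Complex.exp ((↑(2*θ):ℂ)*Complex.I)
      = Complex.exp ((θ:ℂ)*Complex.I) * (↑a - ↑b*Complex.I) := by
  rw [map_mul]
  have h1 : (starRingEnd ℂ) (Complex.exp ((θ:ℂ)*Complex.I)) = Complex.exp (-(θ:ℂ)*Complex.I) := by
    rw [← Complex.exp_conj]; congr 1; simp
  have h2 : (starRingEnd ℂ) ((↑a:ℂ) + ↑b*Complex.I) = ↑a - ↑b*Complex.I := by
    simp [map_add, map_mul, Complex.conj_ofReal, Complex.conj_I]; ring
  rw [h1, h2]
  have h3 : Complex.exp (-(θ:ℂ)*Complex.I) * Complex.exp ((↑(2*θ):ℂ)*Complex.I)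
      = Complex.exp ((θ:ℂ)*Complex.I) := by
    rw [← Complex.exp_add]; congr 1; push_cast; ring
  calc Complex.exp (-(θ:ℂ)*Complex.I) * ((↑a:ℂ) - ↑b*Complex.I)
        * Complex.exp ((↑(2*θ):ℂ)*Complex.I)
      = (Complex.exp (-(θ:ℂ)*Complex.I) * Complex.exp ((↑(2*θ):ℂ)*Complex.I))
          * ((↑a:ℂ) - ↑b*Complex.I) := by ring
    _ = _ := by rw [h3]

lemma mem_segment_strip (θ a b t : ℝ) (hb : 0 ≤ b) (ht : |t| ≤ b) :
    Complex.exp ((θ:ℂ)*Complex.I) * (↑a + ↑t*Complex.I) ∈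
      segmentC (Complex.exp ((θ:ℂ)*Complex.I) * (↑a + ↑b*Complex.I))
        (Complex.exp ((θ:ℂ)*Complex.I) * (↑a - ↑b*Complex.I)) := by
  have ht' := abs_le.mp ht
  rcases eq_or_lt_of_le hb with hb0 | hbpos
  · have ht0 : t = 0 := le_antisymm (by linarith [ht'.2]) (by linarith [ht'.1])
    refine ⟨1, by norm_num, ?_⟩
    rw [ht0, ← hb0]
    push_cast
    ring
  · set μ : ℝ := (t+b)/(2*b) with hμdef
    refine ⟨μ, ⟨div_nonneg (by linarith [ht'.1]) (by linarith),
      by rw [hμdef, div_le_one (by positivity)]; linarith [ht'.2]⟩, ?_⟩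
    have h2b : (2*b) ≠ 0 := by positivity
    have hμ : μ*(2*b) = t + b := by rw [hμdef]; exact div_mul_cancel₀ _ h2b
    have hμc : ((μ:ℝ):ℂ) * (2*(b:ℂ)) = (t:ℂ) + (b:ℂ) := by
      exact_mod_cast congrArg Complex.ofReal hμ
    rw [Complex.ofReal_sub, Complex.ofReal_one]
    linear_combination (-1 : ℂ) * Complex.exp ((θ:ℂ)*Complex.I) * Complex.I * hμc

end MyAux

/-- subadditivity of θ-symmetric SRGs under the θ-chord property. -/
theorem stmt9 {n : ℕ} (𝒜 ℬ : Set (Matrix (Fin n) (Fin n) ℂ)) (θ : ℝ)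
    (hchord : chordProp θ ℬ) :
    SRGtSet θ (𝒜 + ℬ) ⊆ SRGtSet θ 𝒜 + SRGtSet θ ℬ := by
  intro z hz
  simp only [SRGtSet, Set.mem_iUnion, exists_prop] at hz
  obtain ⟨C, hC, hzC⟩ := hz
  rw [Set.mem_add] at hC
  obtain ⟨A, hA, B, hB, hAB⟩ := hC
  have hxex := hzC
  obtain ⟨x, hx, hcase⟩ := hxex
  have hmapC : mapply C x = mapply A x + mapply B x := by rw [← hAB, mapply_add]
  set yA := mapply A x with hyA
  set yB := mapply B x with hyB
  set aA := aV θ x yA with haA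
  set aB := aV θ x yB with haB
  set bA := bV θ x yA with hbA
  set bB := bV θ x yB with hbB
  set aC := aV θ x (mapply C x) with haC
  set bC := bV θ x (mapply C x) with hbC
  have haCeq : aC = aA + aB := by rw [haC, hmapC, aV_add]
  have hbdiff : |bC - bA| ≤ bB := by
    rw [hbC, hmapC]; exact bV_diff_le θ x yA yB hx
  have hbBnn : 0 ≤ bB := bV_nonneg θ x yB
  have hzBmem : Complex.exp ((θ:ℂ)*Complex.I) * (↑aB + ↑bB*Complex.I) ∈ SRGtSet θ ℬ := by
    simp only [SRGtSet, Set.mem_iUnion, exists_prop]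
    exact ⟨B, hB, mem_SRGt_plus θ B x hx⟩
  have hchordB := hchord _ hzBmem
  -- v lies on the chord
  have hvmem : ∀ t : ℝ, |t| ≤ bB →
      Complex.exp ((θ:ℂ)*Complex.I) * (↑aB + ↑t*Complex.I) ∈ SRGtSet θ ℬ := by
    intro t ht
    apply hchordB
    rw [conj_point θ aB bB]
    exact mem_segment_strip θ aB bB t hbBnn ht
  rcases hcase with hzeq | hzeq
  · rw [(pointFormula θ x (mapply C x) hx).1] at hzeq
    have hzsum : z = Complex.exp ((θ:ℂ)*Complex.I) * (↑aA + ↑bA*Complex.I)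
        + Complex.exp ((θ:ℂ)*Complex.I) * (↑aB + ↑(bC - bA)*Complex.I) := by
      rw [hzeq]
      have hc : ((aC:ℝ):ℂ) = ((aA:ℝ):ℂ) + ((aB:ℝ):ℂ) := by exact_mod_cast congrArg Complex.ofReal haCeq
      push_cast
      linear_combination Complex.exp ((θ:ℂ)*Complex.I) * hc
    rw [hzsum]
    apply Set.add_mem_add
    · simp only [SRGtSet, Set.mem_iUnion, exists_prop]
      exact ⟨A, hA, mem_SRGt_plus θ A x hx⟩
    · exact hvmem (bC - bA) hbdiff
  · rw [(pointFormula θ x (mapply C x) hx).2] at hzeq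
    have hzsum : z = Complex.exp ((θ:ℂ)*Complex.I) * (↑aA - ↑bA*Complex.I)
        + Complex.exp ((θ:ℂ)*Complex.I) * (↑aB + ↑(bA - bC)*Complex.I) := by
      rw [hzeq]
      have hc : ((aC:ℝ):ℂ) = ((aA:ℝ):ℂ) + ((aB:ℝ):ℂ) := by exact_mod_cast congrArg Complex.ofReal haCeq
      push_cast
      linear_combination Complex.exp ((θ:ℂ)*Complex.I) * hc
    rw [hzsum]
    apply Set.add_mem_add
    · simp only [SRGtSet, Set.mem_iUnion, exists_prop]
      exact ⟨A, hA, mem_SRGt_minus θ A x hx⟩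
    · exact hvmem (bA - bC) (by rw [abs_sub_comm] at hbdiff; exact hbdiff)
end
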